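/- arXiv:2408.06171 — 6 statements merged into one kernel-verified Lean document; each statement's English description precedes it below -/
import Mathlib

section
/- Let Γ be a simple graph on a vertex set V and, for each v ∈ V, let Λ_v be a simple graph with nonempty vertex set. Then the graph product graph ∗_{v,Γ} Λ_v is rigid if and only if for every vertex v ∈ V the graph Λ_v is rigid and, in addition, v satisfies at least one of the following two conditions: (1) Link_Γ(Link_Γ(v)) = {v}; (2) Λ_v has at least two vertices. -/
/-- `linkSet G S` is the link of a set `S` of vertices in the simple graph `G`:
the set of vertices adjacent to every vertex of `S`.  (For `S = ∅` this is all of `V`.) -/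
def linkSet {V : Type*} (G : SimpleGraph V) (S : Set V) : Set V :=
  {w | ∀ v ∈ S, G.Adj v w}

/-- A simple graph is *rigid* if `Link(Link(v)) = {v}` for every vertex `v`. -/
def IsRigid {V : Type*} (G : SimpleGraph V) : Prop :=
  ∀ v : V, linkSet G (linkSet G {v}) = {v}

/-- The graph product `∗_{v,Γ} Λ_v` of a family of simple graphs `Λ v` over a simple
graph `Γ`: vertices are pairs `⟨v, s⟩` with `v ∈ Γ` and `s ∈ Λ v`, and distinct
vertices `⟨v, s⟩`, `⟨w, t⟩` are adjacent iff either `v = w` and `s, t` are adjacent in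
`Λ v`, or `v ≠ w` and `v, w` are adjacent in `Γ`. -/
def graphProduct {V : Type*} (Γ : SimpleGraph V) (W : V → Type*)
    (Λ : ∀ v : V, SimpleGraph (W v)) : SimpleGraph (Σ v : V, W v) where
  Adj p q := (∃ (v : V) (s t : W v), p = ⟨v, s⟩ ∧ q = ⟨v, t⟩ ∧ (Λ v).Adj s t) ∨
    (p.1 ≠ q.1 ∧ Γ.Adj p.1 q.1)
  symm := by
    constructor
    rintro p q (⟨v, s, t, rfl, rfl, h⟩ | ⟨hne, h⟩)
    · exact Or.inl ⟨v, t, s, rfl, rfl, h.symm⟩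
    · exact Or.inr ⟨hne.symm, h.symm⟩
  loopless := by
    constructor
    rintro p (⟨v, s, t, rfl, hq, h⟩ | ⟨hne, _⟩)
    · obtain rfl : s = t := by simpa using hq
      exact (Λ v).irrefl h
    · exact hne rfl

/-!
In the graph product, the double link of `⟨v, s⟩` consists of the `⟨v, u⟩` with `u` in the
double link of `s` in `Λ v`, together with, when `s` is isolated in `Λ v`, every `⟨w, u⟩` with
`w ≠ v` in the double link of `v` in `Γ` (here the nonemptiness of the fibres is needed).
So `⟨v, s⟩` is rigid iff `s` is rigid in `Λ v` and, if `s` is isolated, `v` is rigid in `Γ`.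
Finally, a rigid graph has an isolated vertex only if it has a single vertex.
-/

section linkSet

variable {α : Type*} (G : SimpleGraph α)

lemma mem_linkSet_linkSet_singleton {p q : α} :
    q ∈ linkSet G (linkSet G {p}) ↔ ∀ r, G.Adj p r → G.Adj r q := by
  simp [linkSet]

lemma self_mem_linkSet_linkSet_singleton (p : α) : p ∈ linkSet G (linkSet G {p}) :=
  (mem_linkSet_linkSet_singleton G).mpr fun _ h => h.symm

lemma linkSet_linkSet_singleton_eq_iff_subset {p : α} :
    linkSet G (linkSet G {p}) = {p} ↔ linkSet G (linkSet G {p}) ⊆ {p} :=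
  ⟨Eq.subset, fun h =>
    h.antisymm (Set.singleton_subset_iff.mpr (self_mem_linkSet_linkSet_singleton G p))⟩

lemma isRigid_iff_forall_subset : IsRigid G ↔ ∀ p, linkSet G (linkSet G {p}) ⊆ {p} :=
  forall_congr' fun _ => linkSet_linkSet_singleton_eq_iff_subset G

lemma IsRigid.subsingleton_of_forall_not_adj {G : SimpleGraph α} (hG : IsRigid G) {s : α}
    (hs : ∀ t, ¬ G.Adj s t) : Subsingleton α := by
  -- the double link of an isolated vertex is everything
  have key : ∀ u, u = s := fun u => by
    have hu : u ∈ linkSet G (linkSet G {s}) :=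
      (mem_linkSet_linkSet_singleton G).mpr fun t ht => (hs t ht).elim
    rwa [hG s] at hu
  exact ⟨fun a b => (key a).trans (key b).symm⟩

end linkSet

section graphProduct

variable {V : Type*} {W : V → Type*} (Γ : SimpleGraph V) (Λ : ∀ v : V, SimpleGraph (W v))

lemma graphProduct_adj_mk_mk {v : V} {s t : W v} :
    (graphProduct Γ W Λ).Adj ⟨v, s⟩ ⟨v, t⟩ ↔ (Λ v).Adj s t := by
  constructor
  · rintro (⟨v', s', t', hs, ht, h⟩ | ⟨hne, -⟩)
    · obtain ⟨rfl, hs⟩ := Sigma.mk.inj_iff.mp hs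
      obtain ⟨-, ht⟩ := Sigma.mk.inj_iff.mp ht
      cases hs; cases ht
      exact h
    · exact (hne rfl).elim
  · exact fun h => Or.inl ⟨v, s, t, rfl, rfl, h⟩

lemma graphProduct_adj_of_fst_ne {p q : Σ v, W v} (hpq : p.1 ≠ q.1) :
    (graphProduct Γ W Λ).Adj p q ↔ Γ.Adj p.1 q.1 := by
  constructor
  · rintro (⟨v, s, t, rfl, rfl, -⟩ | ⟨-, h⟩)
    · exact (hpq rfl).elim
    · exact h
  · exact fun h => Or.inr ⟨hpq, h⟩

lemma mk_mem_linkSet_linkSet_graphProduct_iff {v : V} {s u : W v} :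
    (⟨v, u⟩ : Σ v, W v) ∈
        linkSet (graphProduct Γ W Λ) (linkSet (graphProduct Γ W Λ) {⟨v, s⟩}) ↔
      u ∈ linkSet (Λ v) (linkSet (Λ v) {s}) := by
  simp only [mem_linkSet_linkSet_singleton]
  refine ⟨fun h t hst => ?_, fun h r hr => ?_⟩
  · exact (graphProduct_adj_mk_mk Γ Λ).mp (h _ ((graphProduct_adj_mk_mk Γ Λ).mpr hst))
  · obtain ⟨w, t⟩ := r
    by_cases hwv : w = v
    · subst hwv
      exact (graphProduct_adj_mk_mk Γ Λ).mpr (h t ((graphProduct_adj_mk_mk Γ Λ).mp hr))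
    · have hvw := (graphProduct_adj_of_fst_ne Γ Λ (Ne.symm hwv)).mp hr
      exact (graphProduct_adj_of_fst_ne Γ Λ hwv).mpr hvw.symm

lemma mk_mem_linkSet_linkSet_graphProduct_iff_of_ne [∀ v, Nonempty (W v)] {v w : V}
    (hwv : w ≠ v) {s : W v} {u : W w} :
    (⟨w, u⟩ : Σ v, W v) ∈
        linkSet (graphProduct Γ W Λ) (linkSet (graphProduct Γ W Λ) {⟨v, s⟩}) ↔
      (∀ t, ¬ (Λ v).Adj s t) ∧ w ∈ linkSet Γ (linkSet Γ {v}) := by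
  simp only [mem_linkSet_linkSet_singleton]
  constructor
  · intro h
    -- otherwise `⟨w, u⟩` would be a neighbour of itself
    have hvw : ¬ Γ.Adj v w := fun hvw =>
      (graphProduct Γ W Λ).irrefl (h _ ((graphProduct_adj_of_fst_ne Γ Λ hwv.symm).mpr hvw))
    refine ⟨fun t hst => hvw ?_, fun x hvx => ?_⟩
    · exact (graphProduct_adj_of_fst_ne Γ Λ hwv.symm).mp
        (h ⟨v, t⟩ ((graphProduct_adj_mk_mk Γ Λ).mpr hst))
    · obtain ⟨y⟩ := ‹∀ v, Nonempty (W v)› x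
      have hxw : x ≠ w := by rintro rfl; exact hvw hvx
      exact (graphProduct_adj_of_fst_ne Γ Λ hxw).mp
        (h ⟨x, y⟩ ((graphProduct_adj_of_fst_ne Γ Λ (Γ.ne_of_adj hvx)).mpr hvx))
  · rintro ⟨hs, hw⟩ ⟨x, y⟩ hr
    by_cases hxv : x = v
    · subst hxv
      exact (hs y ((graphProduct_adj_mk_mk Γ Λ).mp hr)).elim
    · have hvx := (graphProduct_adj_of_fst_ne Γ Λ (Ne.symm hxv)).mp hr
      have hxw := hw x hvx
      exact (graphProduct_adj_of_fst_ne Γ Λ (Γ.ne_of_adj hxw)).mpr hxw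

lemma linkSet_linkSet_graphProduct_subset_iff [∀ v, Nonempty (W v)] {v : V} {s : W v} :
    linkSet (graphProduct Γ W Λ) (linkSet (graphProduct Γ W Λ) {⟨v, s⟩}) ⊆ {⟨v, s⟩} ↔
      linkSet (Λ v) (linkSet (Λ v) {s}) ⊆ {s} ∧
        ((∀ t, ¬ (Λ v).Adj s t) → linkSet Γ (linkSet Γ {v}) ⊆ {v}) := by
  constructor
  · intro h
    refine ⟨fun u hu => ?_, fun hs w hw => ?_⟩
    · have := h ((mk_mem_linkSet_linkSet_graphProduct_iff Γ Λ).mpr hu)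
      exact eq_of_heq (Sigma.mk.inj_iff.mp this).2
    · by_contra hwv
      obtain ⟨u⟩ := ‹∀ v, Nonempty (W v)› w
      exact hwv (congrArg Sigma.fst
        (h ((mk_mem_linkSet_linkSet_graphProduct_iff_of_ne Γ Λ hwv (u := u)).mpr ⟨hs, hw⟩)))
  · rintro ⟨hΛ, hΓ⟩ ⟨w, u⟩ hq
    by_cases hwv : w = v
    · subst hwv
      rw [hΛ ((mk_mem_linkSet_linkSet_graphProduct_iff Γ Λ).mp hq)]
      rfl
    · obtain ⟨hs, hw⟩ := (mk_mem_linkSet_linkSet_graphProduct_iff_of_ne Γ Λ hwv).mp hq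
      exact (hwv (hΓ hs hw)).elim

end graphProduct

/-- **Rigidity of graph products of graphs.**  Let `Γ` be a simple graph and, for each
vertex `v`, let `Λ v` be a simple graph with nonempty vertex set.  Then the graph
product `∗_{v,Γ} Λ_v` is rigid if and only if for every vertex `v` the graph `Λ v` is
rigid and, moreover, `v` satisfies `Link_Γ(Link_Γ(v)) = {v}` or `Λ v` has at least two
vertices. -/
theorem isRigid_graphProduct_iff {V : Type*} {W : V → Type*} [∀ v, Nonempty (W v)]
    (Γ : SimpleGraph V) (Λ : ∀ v : V, SimpleGraph (W v)) :
    IsRigid (graphProduct Γ W Λ) ↔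
      ∀ v : V, IsRigid (Λ v) ∧
        (linkSet Γ (linkSet Γ {v}) = {v} ∨ ∃ s t : W v, s ≠ t) := by
  rw [isRigid_iff_forall_subset, Sigma.forall]
  refine forall_congr' fun v => ?_
  simp only [linkSet_linkSet_graphProduct_subset_iff, forall_and, ← isRigid_iff_forall_subset,
    linkSet_linkSet_singleton_eq_iff_subset, ← nontrivial_iff]
  refine and_congr_right fun hΛ => ⟨fun hΓ => ?_, ?_⟩
  · rcases subsingleton_or_nontrivial (W v) with _ | hW
    · obtain ⟨s⟩ := ‹∀ v, Nonempty (W v)› v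
      exact Or.inl (hΓ s fun t hst => hst.ne (Subsingleton.elim s t))
    · exact Or.inr hW
  · rintro (hΓ | hW) s hs
    · exact hΓ
    · exact (not_subsingleton (W v) (hΛ.subsingleton_of_forall_not_adj hs)).elim
end

section
/- Let Γ be a rigid simple graph and let v be a vertex of Γ. Then the subgraph of Γ induced on the connected component of v (the set of all vertices joined to v by a walk in Γ) is rigid. -/
/-- **Connected components of rigid graphs are rigid.**  If `Γ` is a rigid simple graph
and `v` is a vertex, then the subgraph of `Γ` induced on the connected component of `v`
(the set of vertices reachable from `v` by a walk) is rigid. -/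
theorem isRigid_induce_connectedComponent {V : Type*} (Γ : SimpleGraph V)
    (hΓ : IsRigid Γ) (v : V) :
    IsRigid (SimpleGraph.induce {w : V | Γ.Reachable v w} Γ) := by
  intro u
  ext w
  simp only [linkSet, Set.mem_setOf_eq, Set.mem_singleton_iff]
  constructor
  · intro h
    have key : (w : V) ∈ linkSet Γ (linkSet Γ {(u : V)}) := by
      intro x hx
      have hxadj : Γ.Adj (u : V) x := hx _ rfl
      have hxC : Γ.Reachable v x := u.2.trans hxadj.reachable
      exact h ⟨x, hxC⟩ (by rintro y rfl; exact hxadj)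
    rw [hΓ (u : V)] at key
    exact Subtype.ext key
  · rintro rfl
    intro x hx
    exact (hx _ rfl).symm
end

section
/- Let Γ be a rigid simple graph on vertex set V and let Λ ⊆ V be an irreducible component of Γ. Then the subgraph of Γ induced on Λ is rigid. -/
/-- A simple graph on vertex set `V` is *irreducible* if `V` cannot be written as the
union of two disjoint nonempty subsets `S` and `T` with `Link(S) = T`. -/
def GraphIrreducible {V : Type*} (G : SimpleGraph V) : Prop :=
  ¬ ∃ S T : Set V, S.Nonempty ∧ T.Nonempty ∧ Disjoint S T ∧ S ∪ T = Set.univ ∧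
    linkSet G S = T

/-- A nonempty set `Λ` of vertices of `G` is an *irreducible component* of `G` if the
subgraph induced on `Λ` is irreducible and `Link_G(Λ) = V ∖ Λ`. -/
def IsIrreducibleComponent {V : Type*} (G : SimpleGraph V) (Λ : Set V) : Prop :=
  Λ.Nonempty ∧ GraphIrreducible (SimpleGraph.induce Λ G) ∧ linkSet G Λ = Λᶜ

/-- **Irreducible components of rigid graphs are rigid.**  If `Γ` is a rigid simple
graph and `Λ` is an irreducible component of `Γ`, then the subgraph of `Γ` induced on
`Λ` is rigid. -/
theorem isRigid_induce_irreducibleComponent {V : Type*} (Γ : SimpleGraph V)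
    (hΓ : IsRigid Γ) (Λ : Set V) (hΛ : IsIrreducibleComponent Γ Λ) :
    IsRigid (SimpleGraph.induce Λ Γ) := by
  obtain ⟨-, -, hlink⟩ := hΛ
  intro v
  ext w
  constructor
  · intro hw
    -- show ↑w ∈ linkSet Γ (linkSet Γ {↑v}) = {↑v}
    have hmem : (w : V) ∈ linkSet Γ (linkSet Γ {(v : V)}) := by
      intro u hu
      have hadj : Γ.Adj (v : V) u := hu _ rfl
      by_cases huΛ : u ∈ Λ
      · have : (⟨u, huΛ⟩ : Λ) ∈ linkSet (SimpleGraph.induce Λ Γ) {v} := by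
          intro x hx
          rw [Set.mem_singleton_iff] at hx
          subst hx
          exact hadj
        exact hw _ this
      · have : u ∈ linkSet Γ Λ := by rw [hlink]; exact huΛ
        exact (this _ w.2).symm
    rw [hΓ (v : V), Set.mem_singleton_iff] at hmem
    exact Subtype.ext hmem
  · intro hw
    rw [Set.mem_singleton_iff] at hw
    subst hw
    intro u hu
    exact (hu _ rfl).symm
end

section
/- Let Γ be a simple graph. Then Γ is isomorphic, as a simple graph, to the graph product ∗_{c, CΓ} K_c taken over the core CΓ of Γ, where for each core equivalence class c the graph K_c is the complete graph on the vertices belonging to c. Concretely, the map sending a vertex v of Γ to the pair (v̄, v), where v̄ is the core equivalence class of v, is a graph isomorphism from Γ onto this graph product. -/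
/-- The *star* of a vertex `v` in a simple graph `G`: `{v} ∪ Link(v)`. -/
def starSet {V : Type*} (G : SimpleGraph V) (v : V) : Set V :=
  insert v (G.neighborSet v)

/-- The *core equivalence* on the vertices of a simple graph: `v ≈ w` iff
`Star(v) = Star(w)`. -/
def coreSetoid {V : Type*} (G : SimpleGraph V) : Setoid V where
  r v w := starSet G v = starSet G w
  iseqv := ⟨fun _ => rfl, Eq.symm, Eq.trans⟩

/-- The *core* of a simple graph `G`: the simple graph whose vertices are the core
equivalence classes of `G`, with two distinct classes adjacent iff some (equivalently,
any) representatives are adjacent in `G`. -/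
def coreGraph {V : Type*} (G : SimpleGraph V) :
    SimpleGraph (Quotient (coreSetoid G)) where
  Adj c d := c ≠ d ∧ ∃ v w : V,
    Quotient.mk (coreSetoid G) v = c ∧ Quotient.mk (coreSetoid G) w = d ∧ G.Adj v w
  symm := by
    constructor
    rintro c d ⟨hne, v, w, hv, hw, h⟩
    exact ⟨hne.symm, w, v, hw, hv, h.symm⟩
  loopless := ⟨fun c h => h.1 rfl⟩

/-!
Two distinct core-equivalent vertices are adjacent, since each lies in the other's star; and
whether vertices of different classes are adjacent depends only on their classes. So inside a
class adjacency is `≠`, as in a complete graph, and across classes it is adjacency in the core.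
-/

namespace SimpleGraph

variable {V : Type*} (G : SimpleGraph V)

lemma adj_of_starSet_eq {v w : V} (h : starSet G v = starSet G w) (hne : v ≠ w) :
    G.Adj v w := by
  have hv : v ∈ starSet G w := h ▸ Set.mem_insert v _
  exact (hv.resolve_left hne).symm

lemma adj_of_starSet_eq_of_adj {v v' w : V} (h : starSet G v = starSet G v') (hadj : G.Adj v' w)
    (hne : w ≠ v) : G.Adj v w := by
  have hw : w ∈ starSet G v := h ▸ Set.mem_insert_of_mem v' hadj
  exact hw.resolve_left hne

lemma adj_iff_ne_of_coreSetoid_mk_eq {v w : V}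
    (h : Quotient.mk (coreSetoid G) v = Quotient.mk (coreSetoid G) w) : G.Adj v w ↔ v ≠ w :=
  ⟨G.ne_of_adj, G.adj_of_starSet_eq (Quotient.exact h)⟩

lemma coreGraph_adj_mk_iff {v w : V} :
    (coreGraph G).Adj (Quotient.mk _ v) (Quotient.mk _ w) ↔
      Quotient.mk (coreSetoid G) v ≠ Quotient.mk (coreSetoid G) w ∧ G.Adj v w := by
  refine ⟨fun ⟨hne, v', w', hv', hw', hadj⟩ => ⟨hne, ?_⟩,
    fun ⟨hne, hadj⟩ => ⟨hne, v, w, rfl, rfl, hadj⟩⟩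
  have hvw' : G.Adj v w' :=
    G.adj_of_starSet_eq_of_adj (Quotient.exact hv').symm hadj fun e => hne (e ▸ hw')
  exact (G.adj_of_starSet_eq_of_adj (Quotient.exact hw').symm hvw'.symm (hne ∘ congrArg _)).symm

end SimpleGraph

lemma graphProduct_top_adj_iff {V : Type*} (Γ : SimpleGraph V) (W : V → Type*)
    {p q : Σ v, W v} :
    (graphProduct Γ W fun _ => ⊤).Adj p q ↔ p ≠ q ∧ (p.1 = q.1 ∨ Γ.Adj p.1 q.1) := by
  obtain ⟨v, s⟩ := p
  obtain ⟨w, t⟩ := q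
  constructor
  · rintro (⟨u, s', t', hp, hq, hst⟩ | ⟨hne, hadj⟩)
    · cases hp
      cases hq
      exact ⟨fun h => hst (eq_of_heq (Sigma.mk.inj h).2), Or.inl rfl⟩
    · exact ⟨fun h => hne (congrArg Sigma.fst h), Or.inr hadj⟩
  · rintro ⟨hne, hadj⟩
    by_cases hvw : v = w
    · subst hvw
      exact Or.inl ⟨v, s, t, rfl, rfl, fun h => hne (h ▸ rfl)⟩
    · exact Or.inr ⟨hvw, hadj.resolve_left hvw⟩

/-- **Every graph is the graph product of complete graphs over its core.**
The map sending a vertex `v` of `Γ` to the pair `(v̄, v)`, where `v̄` is the core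
equivalence class of `v`, is a graph isomorphism from `Γ` onto the graph product
`∗_{c, CΓ} K_c`, where `K_c` is the complete graph on the vertices belonging to the
core equivalence class `c`: the map is a bijection which preserves and reflects
adjacency. -/
theorem coreGraph_decomposition {V : Type*} (Γ : SimpleGraph V) :
    Function.Bijective (fun v : V =>
      (⟨Quotient.mk (coreSetoid Γ) v, ⟨v, rfl⟩⟩ :
        Σ c : Quotient (coreSetoid Γ), {u : V // Quotient.mk (coreSetoid Γ) u = c})) ∧
    ∀ v w : V, Γ.Adj v w ↔
      (graphProduct (coreGraph Γ)
        (fun c => {u : V // Quotient.mk (coreSetoid Γ) u = c})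
        (fun _ => ⊤)).Adj
        ⟨Quotient.mk (coreSetoid Γ) v, ⟨v, rfl⟩⟩
        ⟨Quotient.mk (coreSetoid Γ) w, ⟨w, rfl⟩⟩ := by
  set e := (Equiv.sigmaFiberEquiv (Quotient.mk (coreSetoid Γ))).symm
  refine ⟨e.bijective, fun v w => ?_⟩
  rw [graphProduct_top_adj_iff, Γ.coreGraph_adj_mk_iff]
  change Γ.Adj v w ↔ e v ≠ e w ∧ _
  rw [e.injective.ne_iff]
  by_cases hvw : Quotient.mk (coreSetoid Γ) v = Quotient.mk (coreSetoid Γ) w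
  · simp only [hvw, true_or, and_true, Γ.adj_iff_ne_of_coreSetoid_mk_eq hvw]
  · simp only [hvw, false_or, ne_eq, not_false_eq_true, true_and]
    exact (and_iff_right_of_imp Γ.ne_of_adj).symm
end

section
/- Let Γ be a simple graph on a vertex set B with right-angled Coxeter group W = W_Γ, and let Γ₁, Γ₂ ⊆ B. Let w ∈ W_{Γ₁}, and let u, u' ∈ W be such that neither u nor u' starts with a letter from Γ₁ (i.e. no element of Γ₁ is a left descent of u or of u') and neither u nor u' ends with a letter from Γ₂ (i.e. no element of Γ₂ is a right descent of u or of u'). Let l be a reduced word for u, i.e. a list of elements of B whose associated product of generators equals u and whose length equals ℓ(u). Then the following are equivalent: (1) u⁻¹ · w · u' ∈ W_{Γ₂}; (2) u = u' and w ∈ W_{Γ₁ ∩ Γ₂ ∩ Link(l)}, where Link(l) = {t ∈ B : t is adjacent in Γ to every letter occurring in l}. -/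
/-!
Tits' cocycle gives a form of the strong exchange condition for right-angled Coxeter groups: if
`j` is a left descent of `x * y` but not of `x`, then `x⁻¹ s_j x` occurs in the left inversion
sequence of every word for `y`. Consequently an element without left (right) descents in `Λ` is
of minimal length in its coset `W_Λ u` (`u W_Λ`), and lengths add along it.

For the forward implication, induct on `ℓ(w)`. A left descent `j ∈ Γ₁` of `w` is one of
`w u' = u v`, where `v = u⁻¹ w u' ∈ W_{Γ₂}`, but not of `u`; so `t = u⁻¹ s_j u` lies in `W_{Γ₂}`,
and as `u` has no right descent in `Γ₂`, `ℓ(u) + ℓ(t) = ℓ(s_j u) = ℓ(u) + 1`. Hence `t = s_j`: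
`j ∈ Γ₂` and `s_j` commutes with `u`. A generator commuting with `u` without being a left descent
of it is adjacent to every letter of a reduced word for `u`, since two non-adjacent generators
generate an infinite dihedral group and are therefore never both left descents of one element.
Now replace `w` by `s_j w`. For `w = 1`, a nontrivial `u⁻¹ u' ∈ W_{Γ₂}` would have a right
descent in `Γ₂`, which would also be one of `u'`. The converse holds because `W_{Link(l)}`
centralises `u`.
-/

/-- The right-angled Coxeter matrix of a simple graph `Γ`: `M i i = 1`, `M i j = 2`
when `i, j` are adjacent in `Γ`, and `M i j = 0` (representing `∞`) otherwise. -/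
def racMatrix {V : Type*} [DecidableEq V] (Γ : SimpleGraph V) [DecidableRel Γ.Adj] :
    CoxeterMatrix V where
  M := Matrix.of fun i j => if i = j then 1 else if Γ.Adj i j then 2 else 0
  isSymm := by
    ext i j
    simp only [Matrix.transpose_apply, Matrix.of_apply]
    by_cases h : i = j
    · subst h; simp
    · rw [if_neg h, if_neg (Ne.symm h)]
      simp only [Γ.adj_comm i j]
  diagonal i := by simp
  off_diagonal i j h := by
    simp only [Matrix.of_apply, if_neg h]
    split <;> omega

/-- The standard parabolic subgroup `W_Λ` of the right-angled Coxeter group of `Γ`,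
generated by the simple reflections indexed by `Λ`. -/
def racParabolic {V : Type*} [DecidableEq V] (Γ : SimpleGraph V) [DecidableRel Γ.Adj]
    (Λ : Set V) : Subgroup (racMatrix Γ).Group :=
  Subgroup.closure ((racMatrix Γ).simple '' Λ)

section InfiniteDihedral

open DihedralGroup

/-- The word length on the infinite dihedral group with respect to the generators `sr 0` and
`sr 1`, whose product is `r 1`. -/
def dihedralLength : DihedralGroup 0 → ℕ
  | r k => 2 * (k : ℤ).natAbs
  | sr k => (2 * (k : ℤ) - 1).natAbs

theorem dihedralLength_sr_mul_le {e : ZMod 0} (he : e = 0 ∨ e = 1) (g : DihedralGroup 0) :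
    dihedralLength (sr e * g) ≤ dihedralLength g + 1 := by
  cases g with
  | r k =>
    change (2 * ((e : ℤ) + k) - 1).natAbs ≤ 2 * (k : ℤ).natAbs + 1
    rcases he with rfl | rfl <;> omega
  | sr k =>
    change 2 * ((k : ℤ) - e).natAbs ≤ (2 * (k : ℤ) - 1).natAbs + 1
    rcases he with rfl | rfl <;> omega

theorem dihedralLength_lt_sr_mul (g : DihedralGroup 0) :
    dihedralLength g < dihedralLength (sr 0 * g) ∨
      dihedralLength g < dihedralLength (sr 1 * g) := by
  cases g with
  | r k =>
    change 2 * (k : ℤ).natAbs < (2 * (0 + (k : ℤ)) - 1).natAbs ∨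
      2 * (k : ℤ).natAbs < (2 * (1 + (k : ℤ)) - 1).natAbs
    omega
  | sr k =>
    change (2 * (k : ℤ) - 1).natAbs < 2 * ((k : ℤ) - 0).natAbs ∨
      (2 * (k : ℤ) - 1).natAbs < 2 * ((k : ℤ) - 1).natAbs
    omega

end InfiniteDihedral

theorem isLiftable_racMatrix {V : Type*} [DecidableEq V] {Γ : SimpleGraph V} [DecidableRel Γ.Adj]
    {G : Type*} [Monoid G] {f : V → G} (hsq : ∀ i, f i * f i = 1)
    (hcomm : ∀ i j, Γ.Adj i j → Commute (f i) (f j)) : (racMatrix Γ).IsLiftable f := by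
  intro i j
  change (f i * f j) ^ (if i = j then 1 else if Γ.Adj i j then 2 else 0) = 1
  split_ifs with hij hadj
  · rw [hij, pow_one, hsq]
  · rw [pow_two, mul_assoc, ← mul_assoc (f j), ← (hcomm i j hadj).eq, mul_assoc, hsq, mul_one,
      hsq]
  · exact pow_zero _

namespace CoxeterSystem

section Parabolic

variable {B W : Type*} [Group W] {M : CoxeterMatrix B} (cs : CoxeterSystem M W)

local prefix:100 "s " => cs.simple
local prefix:100 "π " => cs.wordProd
local prefix:100 "ℓ " => cs.length

def parabolic (Λ : Set B) : Subgroup W := Subgroup.closure (cs.simple '' Λ)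

variable {cs}

theorem simple_mul_mul_simple_eq_iff (i : B) (t x : W) : s i * t * s i = x ↔ t = s i * x * s i := by
  constructor <;> rintro rfl <;> simp [mul_assoc]

theorem simple_mem_parabolic {Λ : Set B} {i : B} (hi : i ∈ Λ) : s i ∈ cs.parabolic Λ :=
  Subgroup.subset_closure ⟨i, hi, rfl⟩

theorem parabolic_mono {Λ Λ' : Set B} (h : Λ ⊆ Λ') : cs.parabolic Λ ≤ cs.parabolic Λ' :=
  Subgroup.closure_mono (Set.image_mono h)

theorem exists_wordProd_of_mem_parabolic {Λ : Set B} {w : W} (hw : w ∈ cs.parabolic Λ) :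
    ∃ ω : List B, (∀ i ∈ ω, i ∈ Λ) ∧ π ω = w := by
  induction hw using Subgroup.closure_induction_left with
  | one => exact ⟨[], by simp, cs.wordProd_nil⟩
  | mul_left _ hx _ _ ih =>
    obtain ⟨i, hi, rfl⟩ := hx
    obtain ⟨ω, hω, rfl⟩ := ih
    exact ⟨i :: ω, by simpa [hi] using hω, (cs.wordProd_cons i ω).symm⟩
  | inv_mul_cancel _ hx _ _ ih =>
    obtain ⟨i, hi, rfl⟩ := hx
    obtain ⟨ω, hω, rfl⟩ := ih
    exact ⟨i :: ω, by simpa [hi] using hω, by rw [cs.inv_simple, cs.wordProd_cons]⟩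

theorem mem_parabolic_of_mem_leftInvSeq {Λ : Set B} {ω : List B} (hω : ∀ i ∈ ω, i ∈ Λ) {t : W}
    (ht : t ∈ cs.leftInvSeq ω) : t ∈ cs.parabolic Λ := by
  induction ω generalizing t with
  | nil => simp [leftInvSeq] at ht
  | cons i ω ih =>
    have hi := simple_mem_parabolic (cs := cs) (hω i List.mem_cons_self)
    rw [leftInvSeq, List.mem_cons, List.mem_map] at ht
    obtain rfl | ⟨t', ht', rfl⟩ := ht
    · exact hi
    · rw [MulAut.conj_apply]
      exact mul_mem (mul_mem hi (ih (fun k hk => hω k (List.mem_cons_of_mem i hk)) ht'))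
        (inv_mem hi)

theorem length_zpow_le (x : W) (k : ℤ) : ℓ (x ^ k) ≤ k.natAbs * ℓ x := by
  have hpow (n : ℕ) : ℓ (x ^ n) ≤ n * ℓ x := by
    induction n with
    | zero => simp
    | succ n ih =>
      rw [pow_succ, Nat.succ_mul]
      exact (cs.length_mul_le _ _).trans (Nat.add_le_add_right ih _)
  cases k with
  | ofNat n => simpa using hpow n
  | negSucc n => simpa [zpow_negSucc, cs.length_inv] using hpow (n + 1)

variable (cs) in
theorem exists_mul_forall_length_le (Λ : Set B) (u : W) :
    ∃ a ∈ cs.parabolic Λ, ∃ u₀, u = a * u₀ ∧ ∀ z ∈ cs.parabolic Λ, ℓ u₀ ≤ ℓ (z * u₀) := by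
  obtain ⟨u₀, hu₀, hmin⟩ := (measure cs.length).wf.has_min {y | u * y⁻¹ ∈ cs.parabolic Λ}
    ⟨u, by simp [one_mem]⟩
  refine ⟨u * u₀⁻¹, hu₀, u₀, by group, fun z hz => not_lt.mp (hmin (z * u₀) ?_)⟩
  simpa [mul_assoc] using mul_mem hu₀ (inv_mem hz)

end Parabolic

section RightAngled

variable {V : Type*} [DecidableEq V] {Γ : SimpleGraph V} [DecidableRel Γ.Adj]
  {W : Type*} [Group W] (cs : CoxeterSystem (racMatrix Γ) W)

local prefix:100 "s " => cs.simple
local prefix:100 "π " => cs.wordProd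
local prefix:100 "ℓ " => cs.length

theorem commute_simple_of_adj {i j : V} (h : Γ.Adj i j) : Commute (s i) (s j) := by
  have hij := cs.simple_mul_simple_pow i j
  rw [show racMatrix Γ i j = 2 from (if_neg h.ne).trans (if_pos h), pow_two] at hij
  calc s i * s j = (s i * s j)⁻¹ := (inv_eq_of_mul_eq_one_right hij).symm
    _ = s j * s i := by rw [mul_inv_rev, cs.inv_simple, cs.inv_simple]

noncomputable def parity (j : V) : W →* ℤˣ :=
  cs.lift ⟨fun k => if k = j then -1 else 1,
    isLiftable_racMatrix (fun k => by split_ifs <;> simp) (fun _ _ _ => Commute.all _ _)⟩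

theorem parity_simple (j k : V) : cs.parity j (s k) = if k = j then -1 else 1 :=
  cs.lift_apply_simple _ k

variable {cs}

theorem mem_of_simple_mem_parabolic {Λ : Set V} {j : V} (h : s j ∈ cs.parabolic Λ) : j ∈ Λ := by
  by_contra hj
  have hle : cs.parabolic Λ ≤ (cs.parity j).ker := by
    refine (Subgroup.closure_le _).mpr ?_
    rintro _ ⟨k, hk, rfl⟩
    exact (cs.parity_simple j k).trans (if_neg (ne_of_mem_of_not_mem hk hj))
  have := hle h
  rw [MonoidHom.mem_ker, parity_simple, if_pos rfl] at this
  exact absurd this (by decide)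

theorem eq_of_simple_eq_conj {j k : V} {u : W} (h : s k = u⁻¹ * s j * u) : k = j := by
  by_contra hkj
  have := congrArg (cs.parity j) h
  rw [map_mul, map_mul, map_inv, mul_comm, ← mul_assoc, mul_inv_cancel, one_mul,
    parity_simple, parity_simple, if_neg hkj, if_pos rfl] at this
  exact absurd this (by decide)

section Tits

open scoped Classical

variable (cs) in
noncomputable def titsInvolution (i : V) : Equiv.Perm (W × ZMod 2) :=
  Function.Involutive.toPerm (fun p => (s i * p.1 * s i, p.2 + if p.1 = s i then 1 else 0)) <| by
    rintro ⟨t, ε⟩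
    ext
    · simp [mul_assoc]
    · show (ε + if t = s i then 1 else 0) + (if s i * t * s i = s i then 1 else 0) = ε
      rw [simple_mul_mul_simple_eq_iff, cs.simple_mul_simple_self, one_mul, add_assoc,
        CharTwo.add_self_eq_zero, add_zero]

theorem titsInvolution_apply (i : V) (p : W × ZMod 2) :
    cs.titsInvolution i p = (s i * p.1 * s i, p.2 + if p.1 = s i then 1 else 0) :=
  rfl

variable (cs) in
/-- Tits' permutation representation, on all of `W × ZMod 2` rather than on reflections × `ZMod 2`
as usual, which spares checking that conjugation preserves reflections. -/
noncomputable def titsRep : W →* Equiv.Perm (W × ZMod 2) :=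
  cs.lift ⟨cs.titsInvolution, isLiftable_racMatrix
    (fun i => Equiv.ext (cs.titsInvolution i).symm_apply_apply)
    (fun i j hij => Equiv.ext fun ⟨t, ε⟩ => by
      have hcomm := (cs.commute_simple_of_adj hij).eq
      have key (k k' : V) : s k * (s k' * t * s k') * s k = (s k * s k') * t * (s k' * s k) := by
        group
      have hconj {k k' : V} (h : s k * s k' = s k' * s k) : s k * s k' * s k = s k' := by
        rw [h, mul_assoc, cs.simple_mul_simple_self, mul_one]
      simp only [Equiv.Perm.mul_apply, titsInvolution_apply, Prod.mk.injEq]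
      constructor
      · rw [key, key, hcomm]
      · rw [simple_mul_mul_simple_eq_iff, simple_mul_mul_simple_eq_iff, hconj hcomm,
          hconj hcomm.symm, add_right_comm])⟩

variable (cs) in
/-- `reflCocycle (π ω) t` is the parity of the number of occurrences of `t` in `rightInvSeq ω`. -/
noncomputable def reflCocycle (w t : W) : ZMod 2 := (titsRep cs w (t, 0)).2

theorem titsRep_simple (i : V) : titsRep cs (s i) = cs.titsInvolution i :=
  cs.lift_apply_simple _ i

theorem titsRep_apply (w t : W) (ε : ZMod 2) :
    titsRep cs w (t, ε) = (w * t * w⁻¹, ε + cs.reflCocycle w t) := by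
  induction w using cs.simple_induction_left generalizing ε with
  | one => simp [reflCocycle]
  | mul_simple_left w i ih =>
    rw [reflCocycle, map_mul, Equiv.Perm.mul_apply, Equiv.Perm.mul_apply, ih, ih, titsRep_simple,
      titsInvolution_apply, titsInvolution_apply, zero_add, add_assoc, mul_inv_rev, cs.inv_simple]
    simp only [mul_assoc]

theorem reflCocycle_mul (a b t : W) :
    cs.reflCocycle (a * b) t = cs.reflCocycle b t + cs.reflCocycle a (b * t * b⁻¹) := by
  rw [reflCocycle, map_mul, Equiv.Perm.mul_apply, titsRep_apply, titsRep_apply, zero_add]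

theorem reflCocycle_simple (i : V) (t : W) :
    cs.reflCocycle (s i) t = if t = s i then 1 else 0 := by
  rw [reflCocycle, titsRep_simple, titsInvolution_apply, zero_add]

theorem mem_rightInvSeq_of_reflCocycle_eq_one {ω : List V} {t : W}
    (h : cs.reflCocycle (π ω) t = 1) : t ∈ cs.rightInvSeq ω := by
  induction ω with
  | nil => exact absurd h (by simp [reflCocycle])
  | cons i ω ih =>
    rw [wordProd_cons, reflCocycle_mul, reflCocycle_simple] at h
    rw [rightInvSeq, List.mem_cons]
    by_cases ht : π ω * t * (π ω)⁻¹ = s i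
    · left
      rw [← ht]
      group
    · rw [if_neg ht, add_zero] at h
      exact Or.inr (ih h)

theorem isRightDescent_iff_reflCocycle_eq_one {w : W} {i : V} :
    cs.IsRightDescent w i ↔ cs.reflCocycle w (s i) = 1 := by
  have of_eq_one {w : W} (h : cs.reflCocycle w (s i) = 1) : cs.IsRightDescent w i := by
    obtain ⟨ω, hω, rfl⟩ := cs.exists_isReduced w
    exact (cs.isRightInversion_simple_iff_isRightDescent _ i).mp
      (cs.isRightInversion_of_mem_rightInvSeq hω (mem_rightInvSeq_of_reflCocycle_eq_one h))
  refine ⟨fun hw => ?_, of_eq_one⟩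
  by_contra h
  apply cs.isRightDescent_iff_not_isRightDescent_mul.mp hw
  apply of_eq_one
  rw [reflCocycle_mul, reflCocycle_simple, if_pos rfl, mul_inv_cancel_right]
  revert h
  generalize cs.reflCocycle w (s i) = a
  decide +revert

end Tits

/-- A form of the strong exchange condition. -/
theorem conj_mem_leftInvSeq_of_isLeftDescent_mul {x : W} {ω : List V} {i : V}
    (h : cs.IsLeftDescent (x * π ω) i) (hx : ¬cs.IsLeftDescent x i) :
    x⁻¹ * s i * x ∈ cs.leftInvSeq ω := by
  rw [← inv_inv (x * π ω), cs.isLeftDescent_inv_iff, isRightDescent_iff_reflCocycle_eq_one,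
    mul_inv_rev, ← wordProd_reverse, reflCocycle_mul] at h
  rw [← inv_inv x, cs.isLeftDescent_inv_iff, isRightDescent_iff_reflCocycle_eq_one] at hx
  have hω : cs.reflCocycle (π ω.reverse) (x⁻¹ * s i * x⁻¹⁻¹) = 1 := by
    revert h hx
    generalize cs.reflCocycle x⁻¹ (s i) = a
    generalize cs.reflCocycle (π ω.reverse) (x⁻¹ * s i * x⁻¹⁻¹) = b
    decide +revert
  simpa [rightInvSeq_reverse] using mem_rightInvSeq_of_reflCocycle_eq_one hω

theorem mem_of_isLeftDescent_of_mem_parabolic {Λ : Set V} {v : W} (hv : v ∈ cs.parabolic Λ)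
    {i : V} (h : cs.IsLeftDescent v i) : i ∈ Λ := by
  obtain ⟨ω, hω, rfl⟩ := exists_wordProd_of_mem_parabolic hv
  have := conj_mem_leftInvSeq_of_isLeftDescent_mul (x := 1) (by rwa [one_mul])
    (cs.not_isLeftDescent_one i)
  rw [inv_one, one_mul, mul_one] at this
  exact mem_of_simple_mem_parabolic (mem_parabolic_of_mem_leftInvSeq hω this)

theorem exists_isLeftDescent_mem_of_mem_parabolic {Λ : Set V} {v : W}
    (hv : v ∈ cs.parabolic Λ) (hne : v ≠ 1) : ∃ i ∈ Λ, cs.IsLeftDescent v i := by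
  obtain ⟨i, hi⟩ := cs.exists_leftDescent_of_ne_one hne
  exact ⟨i, mem_of_isLeftDescent_of_mem_parabolic hv hi, hi⟩

theorem exists_isRightDescent_mem_of_mem_parabolic {Λ : Set V} {v : W}
    (hv : v ∈ cs.parabolic Λ) (hne : v ≠ 1) : ∃ i ∈ Λ, cs.IsRightDescent v i := by
  obtain ⟨i, hi, hdesc⟩ :=
    exists_isLeftDescent_mem_of_mem_parabolic (inv_mem hv) (inv_ne_one.mpr hne)
  exact ⟨i, hi, cs.isLeftDescent_inv_iff.mp hdesc⟩

theorem length_mul_of_forall_length_le {Λ : Set V} {u : W}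
    (hmin : ∀ z ∈ cs.parabolic Λ, ℓ u ≤ ℓ (z * u)) {v : W} (hv : v ∈ cs.parabolic Λ) :
    ℓ (v * u) = ℓ v + ℓ u := by
  induction hn : ℓ v using Nat.strong_induction_on generalizing v with
  | _ n ih =>
  subst hn
  by_cases hne : v = 1
  · simp [hne]
  obtain ⟨i, hi, hvi⟩ := exists_isLeftDescent_mem_of_mem_parabolic hv hne
  have hv' : s i * v ∈ cs.parabolic Λ := mul_mem (simple_mem_parabolic hi) hv
  have hlen := cs.isLeftDescent_iff.mp hvi
  have ih' := ih _ (by omega) hv' rfl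
  have hu : ¬cs.IsLeftDescent (s i * v * u) i := by
    intro hdesc
    obtain ⟨μ, hμ, rfl⟩ := cs.exists_isReduced u
    have ht := conj_mem_leftInvSeq_of_isLeftDescent_mul hdesc
      (by rw [cs.not_isLeftDescent_iff, cs.simple_mul_simple_cancel_left]; omega)
    have hlt := (cs.isLeftInversion_of_mem_leftInvSeq hμ ht).2
    have hmem : (s i * v)⁻¹ * s i * (s i * v) ∈ cs.parabolic Λ :=
      mul_mem (mul_mem (inv_mem hv') (simple_mem_parabolic hi)) hv'
    exact absurd (hmin _ hmem) (not_le.mpr hlt)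
  rw [cs.not_isLeftDescent_iff, ← mul_assoc, cs.simple_mul_simple_cancel_left] at hu
  omega


theorem length_mul_of_not_isLeftDescent {Λ : Set V} {u : W}
    (hu : ∀ i ∈ Λ, ¬cs.IsLeftDescent u i) {v : W} (hv : v ∈ cs.parabolic Λ) :
    ℓ (v * u) = ℓ v + ℓ u := by
  obtain ⟨a, ha, u₀, rfl, hmin⟩ := cs.exists_mul_forall_length_le Λ u
  have hadd (z : W) (hz : z ∈ cs.parabolic Λ) := length_mul_of_forall_length_le hmin hz
  obtain rfl : a = 1 := by
    by_contra hne
    obtain ⟨i, hi, hai⟩ := exists_isLeftDescent_mem_of_mem_parabolic ha hne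
    apply hu i hi
    rw [IsLeftDescent, ← mul_assoc, hadd _ (mul_mem (simple_mem_parabolic hi) ha), hadd a ha]
    exact Nat.add_lt_add_right hai _
  rw [one_mul]
  exact hadd v hv

theorem length_mul_of_not_isRightDescent {Λ : Set V} {u : W}
    (hu : ∀ i ∈ Λ, ¬cs.IsRightDescent u i) {v : W} (hv : v ∈ cs.parabolic Λ) :
    ℓ (u * v) = ℓ u + ℓ v := by
  have hu' : ∀ i ∈ Λ, ¬cs.IsLeftDescent u⁻¹ i := fun i hi h =>
    hu i hi (cs.isLeftDescent_inv_iff.mp h)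
  rw [← cs.length_inv, mul_inv_rev, length_mul_of_not_isLeftDescent hu' (inv_mem hv),
    cs.length_inv, cs.length_inv, add_comm]

theorem isLeftDescent_mul_iff {Λ : Set V} {u : W} (hu : ∀ i ∈ Λ, ¬cs.IsLeftDescent u i)
    {v : W} (hv : v ∈ cs.parabolic Λ) {i : V} (hi : i ∈ Λ) :
    cs.IsLeftDescent (v * u) i ↔ cs.IsLeftDescent v i := by
  rw [IsLeftDescent, IsLeftDescent, ← mul_assoc,
    length_mul_of_not_isLeftDescent hu (mul_mem (simple_mem_parabolic hi) hv),
    length_mul_of_not_isLeftDescent hu hv, Nat.add_lt_add_iff_right]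

theorem isRightDescent_mul_iff {Λ : Set V} {u : W} (hu : ∀ i ∈ Λ, ¬cs.IsRightDescent u i)
    {v : W} (hv : v ∈ cs.parabolic Λ) {i : V} (hi : i ∈ Λ) :
    cs.IsRightDescent (u * v) i ↔ cs.IsRightDescent v i := by
  rw [IsRightDescent, IsRightDescent, mul_assoc,
    length_mul_of_not_isRightDescent hu (mul_mem hv (simple_mem_parabolic hi)),
    length_mul_of_not_isRightDescent hu hv, Nat.add_lt_add_iff_left]

section Dihedral

open DihedralGroup

variable {i j : V}

variable (cs) in
noncomputable def dihedralRep (hij : ¬Γ.Adj i j) : W →* DihedralGroup 0 :=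
  cs.lift ⟨fun k => if k = i then sr 0 else if k = j then sr 1 else 1,
    isLiftable_racMatrix (fun k => by split_ifs <;> simp) fun a b hab => by
      by_cases ha : a = i ∨ a = j
      · have hb : b ≠ i ∧ b ≠ j := by
          rcases ha with rfl | rfl
          · exact ⟨hab.ne.symm, fun h => hij (h ▸ hab)⟩
          · exact ⟨fun h => hij (h ▸ hab.symm), hab.ne.symm⟩
        simp [hb.1, hb.2]
      · rw [not_or] at ha
        simp [ha.1, ha.2]⟩

theorem dihedralRep_simple (hij : ¬Γ.Adj i j) (k : V) :
    cs.dihedralRep hij (s k) = if k = i then sr 0 else if k = j then sr 1 else 1 :=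
  cs.lift_apply_simple _ k

theorem dihedralLength_dihedralRep_le (hij : ¬Γ.Adj i j) (w : W) :
    dihedralLength (cs.dihedralRep hij w) ≤ ℓ w := by
  obtain ⟨ω, hω, rfl⟩ := cs.exists_isReduced w
  rw [hω]
  clear hω
  induction ω with
  | nil => exact (congrArg dihedralLength (map_one _)).le
  | cons k ω ih =>
    rw [wordProd_cons, map_mul, dihedralRep_simple, List.length_cons]
    split_ifs
    · exact (dihedralLength_sr_mul_le (Or.inl rfl) _).trans (Nat.add_le_add_right ih 1)
    · exact (dihedralLength_sr_mul_le (Or.inr rfl) _).trans (Nat.add_le_add_right ih 1)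
    · rw [one_mul]
      exact ih.trans (Nat.le_succ _)

theorem exists_zpow_of_mem_parabolic_pair {a : W} (ha : a ∈ cs.parabolic {i, j}) :
    ∃ k : ℤ, a = (s i * s j) ^ k ∨ a = (s i * s j) ^ k * s i := by
  set ρ := s i * s j with hρ
  have hconj : s i * ρ * (s i)⁻¹ = ρ⁻¹ := by
    rw [hρ, cs.inv_simple, mul_inv_rev, cs.inv_simple, cs.inv_simple,
      cs.simple_mul_simple_cancel_left]
  have hi (k : ℤ) : s i * ρ ^ k = ρ ^ (-k) * s i := by
    rw [zpow_neg, ← inv_zpow, ← hconj, conj_zpow, inv_mul_cancel_right]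
  have hj (k : ℤ) : s j * ρ ^ k = ρ ^ (-(1 + k)) * s i := by
    rw [← hi, zpow_one_add, ← mul_assoc, hρ, ← mul_assoc, cs.simple_mul_simple_self, one_mul]
  have step (c : V) (hc : c ∈ ({i, j} : Set V)) (y : W)
      (hy : ∃ k : ℤ, y = ρ ^ k ∨ y = ρ ^ k * s i) :
      ∃ k : ℤ, s c * y = ρ ^ k ∨ s c * y = ρ ^ k * s i := by
    obtain ⟨k, rfl | rfl⟩ := hy <;> rcases hc with rfl | rfl
    · exact ⟨-k, Or.inr (hi k)⟩
    · exact ⟨-(1 + k), Or.inr (hj k)⟩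
    · exact ⟨-k, Or.inl (by rw [← mul_assoc, hi, mul_assoc, cs.simple_mul_simple_self, mul_one])⟩
    · exact ⟨-(1 + k), Or.inl (by rw [← mul_assoc, hj, mul_assoc, cs.simple_mul_simple_self,
        mul_one])⟩
  induction ha using Subgroup.closure_induction_left with
  | one => exact ⟨0, Or.inl (zpow_zero ρ).symm⟩
  | mul_left _ hx y _ ih =>
    obtain ⟨c, hc, rfl⟩ := hx
    exact step c hc y ih
  | inv_mul_cancel _ hx y _ ih =>
    obtain ⟨c, hc, rfl⟩ := hx
    rw [cs.inv_simple]
    exact step c hc y ih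

theorem length_eq_dihedralLength (hne : i ≠ j) (hij : ¬Γ.Adj i j) {a : W}
    (ha : a ∈ cs.parabolic {i, j}) : ℓ a = dihedralLength (cs.dihedralRep hij a) := by
  refine le_antisymm ?_ (dihedralLength_dihedralRep_le hij a)
  have hρ : cs.dihedralRep hij (s i * s j) = r 1 := by
    rw [map_mul, dihedralRep_simple, dihedralRep_simple, if_pos rfl, if_neg hne.symm, if_pos rfl,
      sr_mul_sr, sub_zero]
  have hpow (k : ℤ) : ℓ ((s i * s j) ^ k) ≤ 2 * k.natAbs := by
    refine (cs.length_zpow_le _ k).trans ?_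
    rw [mul_comm]
    refine Nat.mul_le_mul_right _ ((cs.length_mul_le _ _).trans ?_)
    simp [length_simple]
  obtain ⟨k, rfl | rfl⟩ := exists_zpow_of_mem_parabolic_pair ha
  · rw [map_zpow, hρ, r_one_zpow]
    exact hpow k
  · rw [map_mul, map_zpow, hρ, r_one_zpow, dihedralRep_simple, if_pos rfl, r_mul_sr]
    change _ ≤ (2 * (0 - k) - 1).natAbs
    rcases le_or_gt 0 k with hk | hk
    · have := (cs.length_mul_le ((s i * s j) ^ k) (s i)).trans
        (Nat.add_le_add (hpow k) (cs.length_simple i).le)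
      omega
    · have hshift : (s i * s j) ^ k * s i = (s i * s j) ^ (k + 1) * s j := by
        rw [zpow_add_one, mul_assoc, mul_assoc, cs.simple_mul_simple_self, mul_one]
      have := (cs.length_mul_le ((s i * s j) ^ (k + 1)) (s j)).trans
        (Nat.add_le_add (hpow (k + 1)) (cs.length_simple j).le)
      rw [← hshift] at this
      omega

theorem adj_of_isLeftDescent_of_isLeftDescent {x : W} (hne : i ≠ j)
    (hi : cs.IsLeftDescent x i) (hj : cs.IsLeftDescent x j) : Γ.Adj i j := by
  by_contra hij
  obtain ⟨a, ha, x₀, rfl, hmin⟩ := cs.exists_mul_forall_length_le {i, j} x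
  have hx₀ (c : V) (hc : c ∈ ({i, j} : Set V)) : ¬cs.IsLeftDescent x₀ c :=
    not_lt.mpr (hmin _ (simple_mem_parabolic hc))
  have hlen (c : V) (hc : c ∈ ({i, j} : Set V)) :=
    length_eq_dihedralLength hne hij (mul_mem (simple_mem_parabolic hc) ha)
  rw [isLeftDescent_mul_iff hx₀ ha (by simp), IsLeftDescent, hlen i (by simp),
    length_eq_dihedralLength hne hij ha, map_mul, dihedralRep_simple, if_pos rfl] at hi
  rw [isLeftDescent_mul_iff hx₀ ha (by simp), IsLeftDescent, hlen j (by simp),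
    length_eq_dihedralLength hne hij ha, map_mul, dihedralRep_simple, if_neg hne.symm,
    if_pos rfl] at hj
  rcases dihedralLength_lt_sr_mul (cs.dihedralRep hij a) with h | h <;> omega

end Dihedral

theorem commute_simple_wordProd {t : V} {l : List V} (ht : ∀ i ∈ l, Γ.Adj i t) :
    Commute (s t) (π l) := by
  induction l with
  | nil => exact Commute.one_right _
  | cons i l ih =>
    rw [wordProd_cons]
    exact (cs.commute_simple_of_adj (ht i List.mem_cons_self)).symm.mul_right
      (ih fun k hk => ht k (List.mem_cons_of_mem i hk))

theorem commute_wordProd_of_mem_parabolic {l : List V} {w : W}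
    (hw : w ∈ cs.parabolic {t | ∀ i ∈ l, Γ.Adj i t}) : Commute w (π l) := by
  induction hw using Subgroup.closure_induction with
  | mem _ hx =>
    obtain ⟨t, ht, rfl⟩ := hx
    exact commute_simple_wordProd ht
  | one => exact Commute.one_left _
  | mul _ _ _ _ hx hy => exact hx.mul_left hy
  | inv _ _ hx => exact hx.inv_left

theorem adj_of_commute_of_isReduced {j : V} {l : List V} (hl : cs.IsReduced l)
    (hcomm : Commute (s j) (π l)) (hj : ¬cs.IsLeftDescent (π l) j) : ∀ i ∈ l, Γ.Adj i j := by
  induction l with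
  | nil => simp
  | cons i l ih =>
    have hl' : cs.IsReduced l := by simpa using hl.drop 1
    have hlen : ℓ (s i * π l) = ℓ (π l) + 1 := by
      rw [← wordProd_cons, hl, hl', List.length_cons]
    rw [wordProd_cons] at hcomm hj
    rw [cs.not_isLeftDescent_iff] at hj
    have hne : i ≠ j := by
      rintro rfl
      rw [cs.simple_mul_simple_cancel_left] at hj
      omega
    have hdesc_i : cs.IsLeftDescent (s j * (s i * π l)) i := by
      rw [IsLeftDescent, hj, hcomm.eq, ← mul_assoc, ← mul_assoc, cs.simple_mul_simple_self,
        one_mul]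
      have := cs.length_mul_le (π l) (s j)
      rw [cs.length_simple] at this
      omega
    have hdesc_j : cs.IsLeftDescent (s j * (s i * π l)) j := by
      rw [IsLeftDescent, cs.simple_mul_simple_cancel_left]
      omega
    have hadj := adj_of_isLeftDescent_of_isLeftDescent hne hdesc_i hdesc_j
    have hcomm_ij := cs.commute_simple_of_adj hadj.symm
    rintro k (_ | ⟨_, hk⟩)
    · exact hadj
    refine ih hl' ?_ ?_ k hk
    · simpa [← mul_assoc] using (hcomm_ij.mul_right hcomm)
    · intro hdesc
      have := cs.length_mul_le (s i) (s j * π l)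
      rw [cs.length_simple, ← mul_assoc, ← hcomm_ij.eq, mul_assoc] at this
      unfold IsLeftDescent at hdesc
      omega

theorem commute_simple_and_mem_of_isLeftDescent_mul {Λ : Set V} {u v : W} {j : V}
    (hu : ¬cs.IsLeftDescent u j) (hu₂ : ∀ i ∈ Λ, ¬cs.IsRightDescent u i)
    (hv : v ∈ cs.parabolic Λ) (h : cs.IsLeftDescent (u * v) j) : Commute (s j) u ∧ j ∈ Λ := by
  obtain ⟨μ, hμ, rfl⟩ := exists_wordProd_of_mem_parabolic hv
  have ht := mem_parabolic_of_mem_leftInvSeq hμ (conj_mem_leftInvSeq_of_isLeftDescent_mul h hu)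
  have hlen : ℓ (u⁻¹ * s j * u) = 1 := by
    have hadd := length_mul_of_not_isRightDescent hu₂ ht
    rw [show u * (u⁻¹ * s j * u) = s j * u by group, cs.not_isLeftDescent_iff.mp hu] at hadd
    omega
  obtain ⟨k, hk⟩ := cs.length_eq_one_iff.mp hlen
  obtain rfl := eq_of_simple_eq_conj hk.symm
  refine ⟨?_, mem_of_simple_mem_parabolic (hk ▸ ht)⟩
  calc s k * u = u * (u⁻¹ * s k * u) := by group
    _ = u * s k := by rw [hk]

theorem eq_of_inv_mul_mem_parabolic {Λ : Set V} {u u' : W}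
    (hu : ∀ i ∈ Λ, ¬cs.IsRightDescent u i) (hu' : ∀ i ∈ Λ, ¬cs.IsRightDescent u' i)
    (h : u⁻¹ * u' ∈ cs.parabolic Λ) : u = u' := by
  by_contra hne
  obtain ⟨i, hi, hdesc⟩ := exists_isRightDescent_mem_of_mem_parabolic h
    (fun h1 => hne (inv_mul_eq_one.mp h1))
  rw [← isRightDescent_mul_iff hu h hi, mul_inv_cancel_left] at hdesc
  exact hu' i hi hdesc

theorem eq_and_mem_of_inv_mul_mul_mem_parabolic {Λ₁ Λ₂ : Set V} {u u' : W} {l : List V}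
    (hu₁ : ∀ i ∈ Λ₁, ¬cs.IsLeftDescent u i) (hu'₁ : ∀ i ∈ Λ₁, ¬cs.IsLeftDescent u' i)
    (hu₂ : ∀ i ∈ Λ₂, ¬cs.IsRightDescent u i) (hu'₂ : ∀ i ∈ Λ₂, ¬cs.IsRightDescent u' i)
    (hl : cs.IsReduced l) (hlu : π l = u) {w : W} (hw : w ∈ cs.parabolic Λ₁)
    (hv : u⁻¹ * w * u' ∈ cs.parabolic Λ₂) :
    u = u' ∧ w ∈ cs.parabolic (Λ₁ ∩ Λ₂ ∩ {t | ∀ i ∈ l, Γ.Adj i t}) := by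
  induction hn : ℓ w using Nat.strong_induction_on generalizing w with
  | _ n ih =>
  subst hn
  by_cases hw1 : w = 1
  · subst hw1
    exact ⟨eq_of_inv_mul_mem_parabolic hu₂ hu'₂ (by simpa using hv), one_mem _⟩
  obtain ⟨j, hj₁, hwj⟩ := exists_isLeftDescent_mem_of_mem_parabolic hw hw1
  have huv : cs.IsLeftDescent (u * (u⁻¹ * w * u')) j := by
    rw [show u * (u⁻¹ * w * u') = w * u' by group, isLeftDescent_mul_iff hu'₁ hw hj₁]
    exact hwj
  obtain ⟨hcomm, hj₂⟩ := commute_simple_and_mem_of_isLeftDescent_mul (hu₁ j hj₁) hu₂ hv huv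
  have hlink : ∀ i ∈ l, Γ.Adj i j := by
    subst hlu
    exact adj_of_commute_of_isReduced hl hcomm (hu₁ j hj₁)
  have hv' : u⁻¹ * (s j * w) * u' ∈ cs.parabolic Λ₂ := by
    rw [← mul_assoc, ← hcomm.inv_right.eq, mul_assoc, mul_assoc, ← mul_assoc u⁻¹]
    exact mul_mem (simple_mem_parabolic hj₂) hv
  obtain ⟨rfl, hmem⟩ := ih _ (by rw [← cs.isLeftDescent_iff.mp hwj]; omega)
    (mul_mem (simple_mem_parabolic hj₁) hw) hv' rfl
  refine ⟨rfl, ?_⟩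
  rw [← cs.simple_mul_simple_cancel_left (w := w) j]
  exact mul_mem (simple_mem_parabolic ⟨⟨hj₁, hj₂⟩, hlink⟩) hmem

end RightAngled

end CoxeterSystem

theorem racParabolic_eq_parabolic {V : Type*} [DecidableEq V] (Γ : SimpleGraph V)
    [DecidableRel Γ.Adj] (Λ : Set V) :
    racParabolic Γ Λ = (racMatrix Γ).toCoxeterSystem.parabolic Λ :=
  rfl

/-- **Combinatorial lemma on right-angled Coxeter groups** (Lemma 2.5 of the paper).
Let `Γ` be a simple graph on `V` with right-angled Coxeter system `cs`, and let
`Γ₁, Γ₂ ⊆ V`.  Let `w ∈ W_{Γ₁}`, and let `u, u'` be elements that do not start with a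
letter from `Γ₁` (no element of `Γ₁` is a left descent) and do not end with a letter
from `Γ₂` (no element of `Γ₂` is a right descent).  Let `l` be a reduced word for `u`.
Then `u⁻¹ * w * u' ∈ W_{Γ₂}` if and only if `u = u'` and
`w ∈ W_{Γ₁ ∩ Γ₂ ∩ Link(l)}`, where `Link(l)` is the set of vertices adjacent in `Γ`
to every letter occurring in `l`. -/
theorem rac_conjugate_mem_parabolic_iff {V : Type*} [DecidableEq V]
    (Γ : SimpleGraph V) [DecidableRel Γ.Adj] (Γ₁ Γ₂ : Set V)
    (w u u' : (racMatrix Γ).Group)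
    (hw : w ∈ racParabolic Γ Γ₁)
    (hu₁ : ∀ i ∈ Γ₁, ¬ (racMatrix Γ).toCoxeterSystem.IsLeftDescent u i)
    (hu'₁ : ∀ i ∈ Γ₁, ¬ (racMatrix Γ).toCoxeterSystem.IsLeftDescent u' i)
    (hu₂ : ∀ i ∈ Γ₂, ¬ (racMatrix Γ).toCoxeterSystem.IsRightDescent u i)
    (hu'₂ : ∀ i ∈ Γ₂, ¬ (racMatrix Γ).toCoxeterSystem.IsRightDescent u' i)
    (l : List V)
    (hl : (racMatrix Γ).toCoxeterSystem.wordProd l = u)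
    (hlred : l.length = (racMatrix Γ).toCoxeterSystem.length u) :
    u⁻¹ * w * u' ∈ racParabolic Γ Γ₂ ↔
      u = u' ∧ w ∈ racParabolic Γ (Γ₁ ∩ Γ₂ ∩ {t : V | ∀ i ∈ l, Γ.Adj i t}) := by
  have hred : (racMatrix Γ).toCoxeterSystem.IsReduced l := by
    rw [CoxeterSystem.IsReduced, hl, hlred]
  simp only [racParabolic_eq_parabolic] at hw ⊢
  refine ⟨CoxeterSystem.eq_and_mem_of_inv_mul_mul_mem_parabolic hu₁ hu'₁ hu₂ hu'₂ hred hl hw, ?_⟩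
  rintro ⟨rfl, hw'⟩
  have hcomm : Commute w u := hl ▸ CoxeterSystem.commute_wordProd_of_mem_parabolic
    (CoxeterSystem.parabolic_mono Set.inter_subset_right hw')
  rw [mul_assoc, hcomm.eq, inv_mul_cancel_left]
  exact CoxeterSystem.parabolic_mono (fun t ht => ht.1.2) hw'
end

section
/- Let Γ be a simple graph on a vertex set B with right-angled Coxeter group W = W_Γ, let Λ ⊆ B, and let u ∈ W with u ∉ W_Λ. Let v, v' ∈ W be such that: for every left descent i of v and every left descent j of u, one has i ≠ j and i, j are not adjacent in Γ (every letter at the start of v does not commute with any letter at the end of u⁻¹); and for every left descent i of v' and every right descent j of u, one has i ≠ j and i, j are not adjacent in Γ (every letter at the start of v' does not commute with any letter at the end of u). Let w, w' ∈ W satisfy ℓ(w) ≤ ℓ(v) and ℓ(w') ≤ ℓ(v'). Then w · v⁻¹ · u · v' · w' ∉ W_Λ. -/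
/-!
In `W_Γ` a word is reduced exactly when no letter `i` is followed, after neighbours of `i` only,
by another `i` (`CancelFree`); this comes from the action of `W_Γ` on such words up to
commutation. Hence a left descent of a length-additive product `a * b` is either a left descent
of `a`, or a left descent of `b` commuting with all of `a`. Membership in `W_Λ` is detected by the
retraction `W_Γ → W_Λ` killing the other generators, which does not increase length.

Write `y = a * v⁻¹ * u * v' * e` with lengths adding up. Left multiplication by a generator `s`
changes `a`, shortens `v`, or changes `e`: to reach `u`, `s` would have to commute with all of
`v`, hence with a first letter of `v`, which does not commute with the first letters of `u`; to
pass `u` it would have to commute with its last letters, which the first letters of `v'` do not.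
Starting from `v⁻¹ * u * v'`, the at most `ℓ(v)` letters of `w` never exhaust `v`, and
symmetrically for `w'`, so `u` survives as a length-additive factor of `w * v⁻¹ * u * v' * w'`.
If the product lies in `W_Λ`, the retraction fixes it, so it cannot shorten `u`: `u ∈ W_Λ`.
-/

theorem CoxeterSystem.isLeftDescent_mul_of_length_eq {B W : Type*} [Group W]
    {M : CoxeterMatrix B} (cs : CoxeterSystem M W) {a b : W} {i : B}
    (hab : cs.length (a * b) = cs.length a + cs.length b) (h : cs.IsLeftDescent a i) :
    cs.IsLeftDescent (a * b) i := by
  have := cs.length_mul_le (cs.simple i * a) b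
  rw [mul_assoc] at this
  unfold CoxeterSystem.IsLeftDescent at h ⊢
  omega

namespace RightAngledCoxeter

variable {V : Type*}

section Words

variable (Γ : SimpleGraph V)

/-- Some occurrence of `i` in `ω` is preceded only by neighbours of `i`, so that commutations
bring it to the front of `ω`. -/
def IsInitial (i : V) : List V → Prop
  | [] => False
  | j :: ω => j = i ∨ (Γ.Adj i j ∧ IsInitial i ω)

def CancelFree : List V → Prop
  | [] => True
  | i :: ω => ¬ IsInitial Γ i ω ∧ CancelFree ω

inductive CommStep : List V → List V → Prop
  | swap {a b : V} (h : Γ.Adj a b) (ω : List V) : CommStep (a :: b :: ω) (b :: a :: ω)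
  | cons (k : V) {ω ω' : List V} : CommStep ω ω' → CommStep (k :: ω) (k :: ω')

variable {Γ}

@[simp] theorem not_isInitial_nil {i : V} : ¬ IsInitial Γ i [] := id

@[simp] theorem isInitial_cons {i j : V} {ω : List V} :
    IsInitial Γ i (j :: ω) ↔ j = i ∨ (Γ.Adj i j ∧ IsInitial Γ i ω) := Iff.rfl

@[simp] theorem cancelFree_cons {i : V} {ω : List V} :
    CancelFree Γ (i :: ω) ↔ ¬ IsInitial Γ i ω ∧ CancelFree Γ ω := Iff.rfl

theorem isInitial_append {i : V} {α β : List V} :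
    IsInitial Γ i (α ++ β) ↔
      IsInitial Γ i α ∨ ((∀ j ∈ α, Γ.Adj i j) ∧ IsInitial Γ i β) := by
  induction α with
  | nil => simp
  | cons j α ih =>
    simp only [List.cons_append, isInitial_cons, ih, List.mem_cons, forall_eq_or_imp]
    tauto

theorem IsInitial.mem {i : V} {ω : List V} (h : IsInitial Γ i ω) : i ∈ ω := by
  induction ω with
  | nil => exact h.elim
  | cons j ω ih => rcases h with rfl | ⟨-, h⟩ <;> simp [*]

theorem isInitial_erase_of_adj [DecidableEq V] {i j : V} (hij : Γ.Adj i j) {ω : List V} :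
    IsInitial Γ i (ω.erase j) ↔ IsInitial Γ i ω := by
  induction ω with
  | nil => simp
  | cons k ω ih =>
    by_cases hk : k = j
    · subst hk
      simp [hij, hij.ne']
    · simp [hk, ih]

theorem CancelFree.erase [DecidableEq V] {i : V} {ω : List V} (h : CancelFree Γ ω)
    (hi : IsInitial Γ i ω) : CancelFree Γ (ω.erase i) := by
  induction ω with
  | nil => exact hi.elim
  | cons k ω ih =>
    rcases hi with rfl | ⟨hik, hi⟩
    · simpa using h.2
    · simp only [List.erase_cons, beq_iff_eq, hik.ne', if_false, cancelFree_cons,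
        isInitial_erase_of_adj hik.symm]
      exact ⟨h.1, ih h.2 hi⟩

theorem CancelFree.not_isInitial_erase [DecidableEq V] {i : V} {ω : List V}
    (h : CancelFree Γ ω) (hi : IsInitial Γ i ω) : ¬ IsInitial Γ i (ω.erase i) := by
  induction ω with
  | nil => exact hi.elim
  | cons k ω ih =>
    rcases hi with rfl | ⟨hik, hi⟩
    · simpa using h.1
    · simp only [List.erase_cons, beq_iff_eq, hik.ne', if_false, isInitial_cons, false_or,
        not_and]
      exact fun _ => ih h.2 hi

theorem CommStep.length_eq {ω ω' : List V} (h : CommStep Γ ω ω') : ω.length = ω'.length := by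
  induction h <;> simp [*]

theorem CommStep.isInitial_iff {i : V} {ω ω' : List V} (h : CommStep Γ ω ω') :
    IsInitial Γ i ω ↔ IsInitial Γ i ω' := by
  induction h with
  | swap hab ω =>
    simp only [isInitial_cons]
    constructor <;> rintro (rfl | ⟨h₁, rfl | ⟨h₂, h⟩⟩) <;> simp_all [hab.symm]
  | cons k _ ih => simp [ih]

theorem CommStep.cancelFree_iff {ω ω' : List V} (h : CommStep Γ ω ω') :
    CancelFree Γ ω ↔ CancelFree Γ ω' := by
  induction h with
  | @swap a b hab ω =>
    have ha : IsInitial Γ a (b :: ω) ↔ IsInitial Γ a ω := by simp [hab.ne', hab]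
    have hb : IsInitial Γ b (a :: ω) ↔ IsInitial Γ b ω := by simp [hab.ne, hab.symm]
    simp only [cancelFree_cons, ha, hb]
    tauto
  | cons k h ih => simp [ih, h.isInitial_iff]

theorem CommStep.erase [DecidableEq V] {ω ω' : List V} (h : CommStep Γ ω ω') (i : V) :
    ω.erase i = ω'.erase i ∨ CommStep Γ (ω.erase i) (ω'.erase i) := by
  induction h with
  | @swap a b hab ω =>
    by_cases ha : a = i
    · subst ha; simp [hab.ne']
    by_cases hb : b = i
    · subst hb; simp [hab.ne]
    right
    simpa [List.erase_cons, ha, hb] using CommStep.swap hab (ω.erase i)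
  | @cons k ω ω' h ih =>
    by_cases hk : k = i
    · subst hk; simp [h]
    · simp only [List.erase_cons, beq_iff_eq, hk, if_false, List.cons.injEq, true_and]
      exact ih.imp id (CommStep.cons k)

theorem CancelFree.append {A B : List V} (hA : CancelFree Γ A)
    (hB : CancelFree Γ B) (h : ∀ i, IsInitial Γ i A.reverse → ¬ IsInitial Γ i B) :
    CancelFree Γ (A ++ B) := by
  induction A with
  | nil => exact hB
  | cons k A ih =>
    have hAk : ∀ i, IsInitial Γ i A.reverse → IsInitial Γ i (k :: A).reverse := fun i hi => by
      rw [List.reverse_cons, isInitial_append]; exact Or.inl hi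
    refine ⟨fun hk => ?_, ih hA.2 fun i hi => h i (hAk i hi)⟩
    rcases isInitial_append.mp hk with hk | ⟨hadj, hk⟩
    · exact hA.1 hk
    · refine h k ?_ hk
      rw [List.reverse_cons, isInitial_append]
      exact Or.inr ⟨fun j hj => hadj j (List.mem_reverse.mp hj), by simp⟩

end Words

section Traces

variable (Γ : SimpleGraph V)

abbrev Trace := Quot (CommStep Γ)

variable {Γ}

theorem mk_cons_eq_mk_cons {ω ω' : List V} (h : Quot.mk (CommStep Γ) ω = Quot.mk _ ω')
    (k : V) :
    Quot.mk (CommStep Γ) (k :: ω) = Quot.mk _ (k :: ω') :=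
  congrArg (Quot.map (k :: ·) fun _ _ => CommStep.cons k) h

def Trace.length : Trace Γ → ℕ := Quot.lift List.length fun _ _ h => h.length_eq

def Trace.CancelFree : Trace Γ → Prop :=
  Quot.lift (RightAngledCoxeter.CancelFree Γ) fun _ _ h => propext h.cancelFree_iff

theorem Trace.cancelFree_mk {ω : List V} :
    Trace.CancelFree (Quot.mk (CommStep Γ) ω) ↔ RightAngledCoxeter.CancelFree Γ ω := Iff.rfl

end Traces

section SimpleMul

variable [DecidableEq V] (Γ : SimpleGraph V)

open Classical in
/-- Left multiplication by `s i` on cancel-free words. -/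
noncomputable def simpleMul (i : V) (ω : List V) : List V :=
  if IsInitial Γ i ω then ω.erase i else i :: ω

variable {Γ}

theorem simpleMul_of_isInitial {i : V} {ω : List V} (h : IsInitial Γ i ω) :
    simpleMul Γ i ω = ω.erase i := if_pos h

theorem simpleMul_of_not_isInitial {i : V} {ω : List V} (h : ¬ IsInitial Γ i ω) :
    simpleMul Γ i ω = i :: ω := if_neg h

theorem length_simpleMul_le (i : V) (ω : List V) :
    (simpleMul Γ i ω).length ≤ ω.length + 1 := by
  by_cases h : IsInitial Γ i ω
  · rw [simpleMul_of_isInitial h, List.length_erase_of_mem h.mem]; omega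
  · simp [simpleMul_of_not_isInitial h]

theorem CancelFree.simpleMul {i : V} {ω : List V} (h : CancelFree Γ ω) :
    CancelFree Γ (simpleMul Γ i ω) := by
  by_cases hi : IsInitial Γ i ω
  · rw [simpleMul_of_isInitial hi]; exact h.erase hi
  · rw [simpleMul_of_not_isInitial hi]; exact ⟨hi, h⟩

theorem mk_cons_erase {i : V} {ω : List V} (h : IsInitial Γ i ω) :
    Quot.mk (CommStep Γ) (i :: ω.erase i) = Quot.mk _ ω := by
  induction ω with
  | nil => exact h.elim
  | cons k ω ih =>
    rcases h with rfl | ⟨hik, h⟩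
    · simp
    · rw [List.erase_cons, if_neg (by simpa using hik.ne')]
      exact (Quot.sound (CommStep.swap hik _)).trans (mk_cons_eq_mk_cons (ih h) k)

theorem CommStep.mk_simpleMul {ω ω' : List V} (h : CommStep Γ ω ω') (i : V) :
    Quot.mk (CommStep Γ) (simpleMul Γ i ω) = Quot.mk _ (simpleMul Γ i ω') := by
  by_cases hi : IsInitial Γ i ω
  · rw [simpleMul_of_isInitial hi, simpleMul_of_isInitial (h.isInitial_iff.mp hi)]
    rcases h.erase i with he | he
    · rw [he]
    · exact Quot.sound he
  · rw [simpleMul_of_not_isInitial hi, simpleMul_of_not_isInitial (mt h.isInitial_iff.mpr hi)]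
    exact Quot.sound (CommStep.cons i h)

theorem mk_simpleMul_simpleMul {i : V} {ω : List V} (h : CancelFree Γ ω) :
    Quot.mk (CommStep Γ) (simpleMul Γ i (simpleMul Γ i ω)) = Quot.mk _ ω := by
  by_cases hi : IsInitial Γ i ω
  · rw [simpleMul_of_isInitial hi, simpleMul_of_not_isInitial (h.not_isInitial_erase hi)]
    exact mk_cons_erase hi
  · rw [simpleMul_of_not_isInitial hi, simpleMul_of_isInitial (isInitial_cons.mpr (Or.inl rfl)),
      List.erase_cons_head]

theorem mk_simpleMul_comm_of_adj {i j : V} (hij : Γ.Adj i j) (ω : List V) :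
    Quot.mk (CommStep Γ) (simpleMul Γ i (simpleMul Γ j ω)) =
      Quot.mk _ (simpleMul Γ j (simpleMul Γ i ω)) := by
  have hi_cons : IsInitial Γ i (j :: ω) ↔ IsInitial Γ i ω := by simp [hij.ne', hij]
  have hj_cons : IsInitial Γ j (i :: ω) ↔ IsInitial Γ j ω := by simp [hij.ne, hij.symm]
  have hi_erase := isInitial_erase_of_adj (ω := ω) hij
  have hj_erase := isInitial_erase_of_adj (ω := ω) hij.symm
  by_cases hi : IsInitial Γ i ω <;> by_cases hj : IsInitial Γ j ω
  · rw [simpleMul_of_isInitial hi, simpleMul_of_isInitial hj,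
      simpleMul_of_isInitial (hi_erase.mpr hi), simpleMul_of_isInitial (hj_erase.mpr hj),
      List.erase_comm]
  · rw [simpleMul_of_isInitial hi, simpleMul_of_not_isInitial hj,
      simpleMul_of_isInitial (hi_cons.mpr hi), simpleMul_of_not_isInitial (mt hj_erase.mp hj),
      List.erase_cons_tail (by simpa using hij.ne')]
  · rw [simpleMul_of_not_isInitial hi, simpleMul_of_isInitial hj,
      simpleMul_of_isInitial (hj_cons.mpr hj), simpleMul_of_not_isInitial (mt hi_erase.mp hi),
      List.erase_cons_tail (by simpa using hij.ne)]
  · rw [simpleMul_of_not_isInitial hi, simpleMul_of_not_isInitial hj,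
      simpleMul_of_not_isInitial (mt hi_cons.mp hi), simpleMul_of_not_isInitial (mt hj_cons.mp hj)]
    exact Quot.sound (CommStep.swap hij ω)

namespace Trace

noncomputable def simpleMul (i : V) : Trace Γ → Trace Γ :=
  Quot.lift (fun ω => Quot.mk _ (RightAngledCoxeter.simpleMul Γ i ω)) fun _ _ h =>
    h.mk_simpleMul i

theorem CancelFree.simpleMul {i : V} {x : Trace Γ} (h : x.CancelFree) :
    (x.simpleMul i).CancelFree := by
  induction x using Quot.ind
  exact RightAngledCoxeter.CancelFree.simpleMul (cancelFree_mk.mp h)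

theorem length_simpleMul_le (i : V) (x : Trace Γ) : (x.simpleMul i).length ≤ x.length + 1 := by
  induction x using Quot.ind
  exact RightAngledCoxeter.length_simpleMul_le i _

theorem simpleMul_simpleMul {i : V} {x : Trace Γ} (h : x.CancelFree) :
    (x.simpleMul i).simpleMul i = x := by
  induction x using Quot.ind
  exact mk_simpleMul_simpleMul (cancelFree_mk.mp h)

theorem simpleMul_comm_of_adj {i j : V} (hij : Γ.Adj i j) (x : Trace Γ) :
    (x.simpleMul j).simpleMul i = (x.simpleMul i).simpleMul j := by
  induction x using Quot.ind
  exact mk_simpleMul_comm_of_adj hij _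

variable (Γ) in
noncomputable def simplePerm (i : V) : Equiv.Perm {x : Trace Γ // x.CancelFree} :=
  Function.Involutive.toPerm (fun x => ⟨x.1.simpleMul i, x.2.simpleMul⟩) fun x =>
    Subtype.ext (simpleMul_simpleMul x.2)

@[simp] theorem simplePerm_apply (i : V) (x : {x : Trace Γ // x.CancelFree}) :
    (simplePerm Γ i x).1 = x.1.simpleMul i := rfl

end Trace

end SimpleMul

section Group

variable [DecidableEq V] {Γ : SimpleGraph V} [DecidableRel Γ.Adj]

variable (Γ) in
abbrev cs : CoxeterSystem (racMatrix Γ) (racMatrix Γ).Group := (racMatrix Γ).toCoxeterSystem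

theorem racMatrix_apply (i j : V) :
    racMatrix Γ i j = if i = j then 1 else if Γ.Adj i j then 2 else 0 := rfl

theorem commute_simple_of_adj {i j : V} (h : Γ.Adj i j) :
    Commute ((cs Γ).simple i) ((cs Γ).simple j) := by
  have hsq := (cs Γ).simple_mul_simple_pow i j
  rw [racMatrix_apply, if_neg h.ne, if_pos h, pow_two, mul_eq_one_iff_eq_inv, mul_inv_rev,
    (cs Γ).inv_simple, (cs Γ).inv_simple] at hsq
  exact hsq

theorem wordProd_mem_racParabolic {Λ : Set V} {ω : List V} (h : ∀ j ∈ ω, j ∈ Λ) :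
    (cs Γ).wordProd ω ∈ racParabolic Γ Λ := by
  induction ω with
  | nil => simp [(racParabolic Γ Λ).one_mem]
  | cons j ω ih =>
    rw [(cs Γ).wordProd_cons]
    refine mul_mem (Subgroup.subset_closure ⟨j, h j (by simp), rfl⟩) (ih fun k hk => h k ?_)
    simp [hk]

theorem commute_simple_of_mem_racParabolic {i : V} {w : (racMatrix Γ).Group}
    (hw : w ∈ racParabolic Γ (Γ.neighborSet i)) : Commute ((cs Γ).simple i) w := by
  induction hw using Subgroup.closure_induction with
  | mem x hx =>
    obtain ⟨j, hj, rfl⟩ := hx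
    exact commute_simple_of_adj hj
  | one => exact Commute.one_right _
  | mul x y _ _ hx hy => exact hx.mul_right hy
  | inv x _ hx => exact hx.inv_right

theorem wordProd_eq_simple_mul_erase {i : V} {ω : List V} (h : IsInitial Γ i ω) :
    (cs Γ).wordProd ω = (cs Γ).simple i * (cs Γ).wordProd (ω.erase i) := by
  induction ω with
  | nil => exact h.elim
  | cons k ω ih =>
    rcases h with rfl | ⟨hik, h⟩
    · simp [(cs Γ).wordProd_cons]
    · rw [List.erase_cons_tail (by simpa using hik.ne'), (cs Γ).wordProd_cons,
        (cs Γ).wordProd_cons, ih h, ← mul_assoc, ← mul_assoc, (commute_simple_of_adj hik).eq]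

theorem isLiftable_simplePerm : (racMatrix Γ).IsLiftable (Trace.simplePerm Γ) := by
  intro i j
  rw [racMatrix_apply]
  split_ifs with hij hadj
  · subst hij
    refine Equiv.ext fun x => Subtype.ext ?_
    simpa using Trace.simpleMul_simpleMul x.2
  · refine Equiv.ext fun x => Subtype.ext ?_
    simp only [pow_two, Equiv.Perm.mul_apply, Trace.simplePerm_apply, Equiv.Perm.one_apply]
    rw [Trace.simpleMul_comm_of_adj hadj, Trace.simpleMul_simpleMul x.2.simpleMul,
      Trace.simpleMul_simpleMul x.2]
  · exact pow_zero _

variable (Γ) in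
noncomputable def traceRep : (racMatrix Γ).Group →* Equiv.Perm {x : Trace Γ // x.CancelFree} :=
  (cs Γ).lift ⟨Trace.simplePerm Γ, isLiftable_simplePerm⟩

theorem traceRep_simple (i : V) : traceRep Γ ((cs Γ).simple i) = Trace.simplePerm Γ i :=
  (cs Γ).lift_apply_simple isLiftable_simplePerm i

theorem traceRep_wordProd_nil {ω : List V} (h : CancelFree Γ ω) :
    (traceRep Γ ((cs Γ).wordProd ω) ⟨Quot.mk _ [], trivial⟩).1 = Quot.mk _ ω := by
  induction ω with
  | nil => simp
  | cons i ω ih =>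
    rw [(cs Γ).wordProd_cons, map_mul, Equiv.Perm.mul_apply, traceRep_simple,
      Trace.simplePerm_apply, ih h.2]
    exact congrArg _ (simpleMul_of_not_isInitial h.1)

theorem length_traceRep_wordProd_le (ω : List V) (x : {x : Trace Γ // x.CancelFree}) :
    (traceRep Γ ((cs Γ).wordProd ω) x).1.length ≤ x.1.length + ω.length := by
  induction ω with
  | nil => simp
  | cons i ω ih =>
    rw [(cs Γ).wordProd_cons, map_mul, Equiv.Perm.mul_apply, traceRep_simple,
      Trace.simplePerm_apply, List.length_cons]
    exact (Trace.length_simpleMul_le i _).trans (by omega)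

/-- The length of a trace grows by at most one under each generator, and `traceRep` carries the
empty trace to the trace of any cancel-free word. -/
theorem CancelFree.isReduced {ω : List V} (h : CancelFree Γ ω) : (cs Γ).IsReduced ω := by
  obtain ⟨ω', hω', he⟩ := (cs Γ).exists_isReduced ((cs Γ).wordProd ω)
  have hle := length_traceRep_wordProd_le (Γ := Γ) ω' ⟨Quot.mk _ [], trivial⟩
  rw [← he, traceRep_wordProd_nil h] at hle
  refine le_antisymm ((cs Γ).length_wordProd_le ω) ?_
  rw [he, hω']
  simpa [Trace.length] using hle

theorem _root_.CoxeterSystem.IsReduced.cancelFree {ω : List V} (h : (cs Γ).IsReduced ω) :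
    CancelFree Γ ω := by
  induction ω with
  | nil => trivial
  | cons i ω ih =>
    refine ⟨fun hi => ?_, ih (by simpa using h.drop 1)⟩
    have hprod : (cs Γ).wordProd (i :: ω) = (cs Γ).wordProd (ω.erase i) := by
      rw [(cs Γ).wordProd_cons, wordProd_eq_simple_mul_erase hi,
        (cs Γ).simple_mul_simple_cancel_left]
    have hle := (cs Γ).length_wordProd_le (ω.erase i)
    rw [List.length_erase_of_mem hi.mem] at hle
    have h' : (cs Γ).length ((cs Γ).wordProd (i :: ω)) = ω.length + 1 := h
    rw [hprod] at h'
    omega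

theorem isLeftDescent_wordProd_iff {ω : List V} (h : CancelFree Γ ω) {i : V} :
    (cs Γ).IsLeftDescent ((cs Γ).wordProd ω) i ↔ IsInitial Γ i ω := by
  unfold CoxeterSystem.IsLeftDescent
  rw [h.isReduced]
  constructor
  · intro hd
    by_contra hi
    have hred : (cs Γ).IsReduced (i :: ω) := CancelFree.isReduced ⟨hi, h⟩
    rw [← (cs Γ).wordProd_cons, hred] at hd
    simp at hd
  · intro hi
    rw [wordProd_eq_simple_mul_erase hi, (cs Γ).simple_mul_simple_cancel_left]
    have hle := (cs Γ).length_wordProd_le (ω.erase i)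
    rw [List.length_erase_of_mem hi.mem] at hle
    have := List.length_pos_of_mem hi.mem
    omega

theorem length_mul_of_forall_not_isLeftDescent {a b : (racMatrix Γ).Group}
    (h : ∀ i, (cs Γ).IsRightDescent a i → ¬ (cs Γ).IsLeftDescent b i) :
    (cs Γ).length (a * b) = (cs Γ).length a + (cs Γ).length b := by
  obtain ⟨A, hA, rfl⟩ := (cs Γ).exists_isReduced a
  obtain ⟨B, hB, rfl⟩ := (cs Γ).exists_isReduced b
  have hAB : CancelFree Γ (A ++ B) := hA.cancelFree.append hB.cancelFree fun i hiA hiB => by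
    refine h i ?_ ((isLeftDescent_wordProd_iff hB.cancelFree).mpr hiB)
    rw [← (cs Γ).isLeftDescent_inv_iff, ← (cs Γ).wordProd_reverse]
    exact (isLeftDescent_wordProd_iff hA.reverse.cancelFree).mpr hiA
  rw [← (cs Γ).wordProd_append, hAB.isReduced, hA, hB, List.length_append]

theorem isLeftDescent_mul_cases {a b : (racMatrix Γ).Group} {i : V}
    (hab : (cs Γ).length (a * b) = (cs Γ).length a + (cs Γ).length b)
    (h : (cs Γ).IsLeftDescent (a * b) i) :
    (cs Γ).IsLeftDescent a i ∨
      (a ∈ racParabolic Γ (Γ.neighborSet i) ∧ (cs Γ).IsLeftDescent b i) := by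
  obtain ⟨A, hA, rfl⟩ := (cs Γ).exists_isReduced a
  obtain ⟨B, hB, rfl⟩ := (cs Γ).exists_isReduced b
  have hAB : CancelFree Γ (A ++ B) := CoxeterSystem.IsReduced.cancelFree <| by
    rw [CoxeterSystem.IsReduced, (cs Γ).wordProd_append, hab, hA, hB, List.length_append]
  rw [← (cs Γ).wordProd_append, isLeftDescent_wordProd_iff hAB, isInitial_append] at h
  rcases h with h | ⟨hadj, h⟩
  · exact Or.inl ((isLeftDescent_wordProd_iff hA.cancelFree).mpr h)
  · exact Or.inr
      ⟨wordProd_mem_racParabolic hadj, (isLeftDescent_wordProd_iff hB.cancelFree).mpr h⟩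

section Retraction

open Classical

theorem isLiftable_retraction (Λ : Set V) :
    (racMatrix Γ).IsLiftable fun i => if i ∈ Λ then (cs Γ).simple i else 1 := by
  intro i j
  by_cases hi : i ∈ Λ <;> by_cases hj : j ∈ Λ <;>
    simp only [hi, hj, if_true, if_false, mul_one, one_mul, one_pow]
  · exact (cs Γ).simple_mul_simple_pow i j
  all_goals
    rw [racMatrix_apply, if_neg (by rintro rfl; tauto)]
    split_ifs
    · exact (pow_two _).trans ((cs Γ).simple_mul_simple_self _)
    · exact pow_zero _

variable (Γ) in
/-- Kills the generators outside `Λ`; well defined because every relator `(s i * s j) ^ m` of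
`W_Γ` has `i = j` or `m` even. -/
noncomputable def retraction (Λ : Set V) : (racMatrix Γ).Group →* (racMatrix Γ).Group :=
  (cs Γ).lift ⟨_, isLiftable_retraction Λ⟩

variable {Λ : Set V}

theorem retraction_simple (i : V) :
    retraction Γ Λ ((cs Γ).simple i) = if i ∈ Λ then (cs Γ).simple i else 1 :=
  (cs Γ).lift_apply_simple (isLiftable_retraction Λ) i

theorem retraction_wordProd (ω : List V) :
    retraction Γ Λ ((cs Γ).wordProd ω) = (cs Γ).wordProd (ω.filter (· ∈ Λ)) := by
  induction ω with
  | nil => simp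
  | cons i ω ih =>
    rw [(cs Γ).wordProd_cons, map_mul, retraction_simple, ih, List.filter_cons]
    split_ifs with hi <;> simp_all [(cs Γ).wordProd_cons]

theorem retraction_eq_self_of_mem {w : (racMatrix Γ).Group} (hw : w ∈ racParabolic Γ Λ) :
    retraction Γ Λ w = w := by
  induction hw using Subgroup.closure_induction with
  | mem x hx =>
    obtain ⟨j, hj, rfl⟩ := hx
    exact (retraction_simple j).trans (if_pos hj)
  | one => exact map_one _
  | mul x y _ _ hx hy => rw [map_mul, hx, hy]
  | inv x _ hx => rw [map_inv, hx]

theorem length_retraction_le (w : (racMatrix Γ).Group) :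
    (cs Γ).length (retraction Γ Λ w) ≤ (cs Γ).length w := by
  obtain ⟨ω, hω, rfl⟩ := (cs Γ).exists_isReduced w
  rw [retraction_wordProd, hω]
  exact ((cs Γ).length_wordProd_le _).trans (List.length_filter_le _ _)

theorem mem_racParabolic_of_length_le_length_retraction {w : (racMatrix Γ).Group}
    (h : (cs Γ).length w ≤ (cs Γ).length (retraction Γ Λ w)) : w ∈ racParabolic Γ Λ := by
  obtain ⟨ω, hω, rfl⟩ := (cs Γ).exists_isReduced w
  rw [retraction_wordProd, hω] at h
  have hfilter := ((cs Γ).length_wordProd_le (ω.filter (· ∈ Λ))).trans' h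
  have hall := List.length_filter_eq_length_iff.mp
    (le_antisymm (List.length_filter_le _ _) hfilter)
  exact wordProd_mem_racParabolic fun j hj => by simpa using hall j hj

theorem mem_of_isLeftDescent_of_mem_racParabolic {w : (racMatrix Γ).Group} {k : V}
    (hw : w ∈ racParabolic Γ Λ) (hk : (cs Γ).IsLeftDescent w k) : k ∈ Λ := by
  by_contra hkΛ
  have hfix : retraction Γ Λ ((cs Γ).simple k * w) = w := by
    rw [map_mul, retraction_simple, if_neg hkΛ, one_mul, retraction_eq_self_of_mem hw]
  have hle := length_retraction_le (Λ := Λ) ((cs Γ).simple k * w)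
  rw [hfix] at hle
  exact absurd hk (not_lt.mpr hle)

theorem mem_racParabolic_of_mul_mul_mem {a u b : (racMatrix Γ).Group}
    (hlen : (cs Γ).length (a * u * b) = (cs Γ).length a + (cs Γ).length u + (cs Γ).length b)
    (h : a * u * b ∈ racParabolic Γ Λ) : u ∈ racParabolic Γ Λ := by
  refine mem_racParabolic_of_length_le_length_retraction ?_
  have hfix := retraction_eq_self_of_mem h
  rw [map_mul, map_mul] at hfix
  have h₁ := (cs Γ).length_mul_le (retraction Γ Λ a * retraction Γ Λ u) (retraction Γ Λ b)
  have h₂ := (cs Γ).length_mul_le (retraction Γ Λ a) (retraction Γ Λ u)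
  have ha := length_retraction_le (Λ := Λ) a
  have hb := length_retraction_le (Λ := Λ) b
  rw [hfix] at h₁
  omega

end Retraction

section Sandwich

variable (Γ) in
def LeftDescentsNoncommuting (v u : (racMatrix Γ).Group) : Prop :=
  ∀ i j, (cs Γ).IsLeftDescent v i → (cs Γ).IsLeftDescent u j → i ≠ j ∧ ¬ Γ.Adj i j

variable (Γ) in
def Guarded (u : (racMatrix Γ).Group) (m m' : ℕ) (y : (racMatrix Γ).Group) : Prop :=
  ∃ a v v' e, y = a * v⁻¹ * u * v' * e ∧
    (cs Γ).length y = (cs Γ).length a + (cs Γ).length v + (cs Γ).length u +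
      (cs Γ).length v' + (cs Γ).length e ∧
    m ≤ (cs Γ).length v ∧ m' ≤ (cs Γ).length v' ∧
    LeftDescentsNoncommuting Γ v u ∧ LeftDescentsNoncommuting Γ v' u⁻¹

theorem length_sandwich_le (a v u v' e : (racMatrix Γ).Group) :
    (cs Γ).length (a * v⁻¹ * u * v' * e) ≤ (cs Γ).length a + (cs Γ).length v +
      (cs Γ).length u + (cs Γ).length v' + (cs Γ).length e := by
  have h₁ := (cs Γ).length_mul_le a v⁻¹
  have h₂ := (cs Γ).length_mul_le (a * v⁻¹) u
  have h₃ := (cs Γ).length_mul_le (a * v⁻¹ * u) v'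
  have h₄ := (cs Γ).length_mul_le (a * v⁻¹ * u * v') e
  rw [(cs Γ).length_inv] at h₁
  omega

theorem isLeftDescent_sandwich_cases {a v u v' e : (racMatrix Γ).Group} {i : V}
    (hlen : (cs Γ).length (a * v⁻¹ * u * v' * e) = (cs Γ).length a + (cs Γ).length v +
      (cs Γ).length u + (cs Γ).length v' + (cs Γ).length e)
    (hv : LeftDescentsNoncommuting Γ v u) (hv' : LeftDescentsNoncommuting Γ v' u⁻¹)
    (hv₁ : v ≠ 1) (hu₁ : u ≠ 1) (hi : (cs Γ).IsLeftDescent (a * v⁻¹ * u * v' * e) i) :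
    (cs Γ).IsLeftDescent a i ∨
      (a ∈ racParabolic Γ (Γ.neighborSet i) ∧ (cs Γ).IsRightDescent v i) ∨
      (a * v⁻¹ * u * v' ∈ racParabolic Γ (Γ.neighborSet i) ∧
        (cs Γ).IsLeftDescent e i) := by
  rw [show a * v⁻¹ * u * v' * e = a * (v⁻¹ * (u * (v' * e))) by group] at hlen hi
  have h₁ := (cs Γ).length_mul_le a (v⁻¹ * (u * (v' * e)))
  have h₂ := (cs Γ).length_mul_le v⁻¹ (u * (v' * e))
  have h₃ := (cs Γ).length_mul_le u (v' * e)
  have h₄ := (cs Γ).length_mul_le v' e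
  rw [(cs Γ).length_inv] at h₂
  rcases isLeftDescent_mul_cases (by omega) hi with ha | ⟨ha, hi⟩
  · exact Or.inl ha
  rcases isLeftDescent_mul_cases (by rw [(cs Γ).length_inv]; omega) hi with hvi | ⟨hvN, hi⟩
  · exact Or.inr (Or.inl ⟨ha, (cs Γ).isLeftDescent_inv_iff.mp hvi⟩)
  rcases isLeftDescent_mul_cases (by omega) hi with hui | ⟨huN, hi⟩
  · obtain ⟨k, hk⟩ := (cs Γ).exists_leftDescent_of_ne_one hv₁
    have hik : Γ.Adj i k := mem_of_isLeftDescent_of_mem_racParabolic (inv_mem_iff.mp hvN) hk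
    exact ((hv k i hk hui).2 hik.symm).elim
  rcases isLeftDescent_mul_cases (by omega) hi with hv'i | ⟨hv'N, hi⟩
  · obtain ⟨j, hj⟩ := (cs Γ).exists_leftDescent_of_ne_one (inv_ne_one.mpr hu₁)
    have hij : Γ.Adj i j := mem_of_isLeftDescent_of_mem_racParabolic (inv_mem huN) hj
    exact ((hv' i j hv'i hj).2 hij).elim
  · exact Or.inr (Or.inr ⟨mul_mem (mul_mem (mul_mem ha hvN) huN) hv'N, hi⟩)

theorem Guarded.inv {u y : (racMatrix Γ).Group} {m m' : ℕ} (h : Guarded Γ u m m' y) :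
    Guarded Γ u⁻¹ m' m y⁻¹ := by
  obtain ⟨a, v, v', e, rfl, hlen, hm, hm', hv, hv'⟩ := h
  refine ⟨e⁻¹, v', v, a⁻¹, by group, ?_, hm', hm, hv', by rwa [inv_inv]⟩
  simp only [(cs Γ).length_inv]
  omega

theorem Guarded.simple_mul {u y : (racMatrix Γ).Group} {m m' : ℕ} (hu : u ≠ 1)
    (h : Guarded Γ u (m + 1) m' y) (i : V) : Guarded Γ u m m' ((cs Γ).simple i * y) := by
  obtain ⟨a, v, v', e, rfl, hlen, hm, hm', hv, hv'⟩ := h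
  have hv₁ : v ≠ 1 := by rintro rfl; simp at hm
  by_cases hi : (cs Γ).IsLeftDescent (a * v⁻¹ * u * v' * e) i
  · have hy := (cs Γ).isLeftDescent_iff.mp hi
    rcases isLeftDescent_sandwich_cases hlen hv hv' hv₁ hu hi with
      ha | ⟨ha, hvi⟩ | ⟨hN, he⟩
    · have ha' := (cs Γ).isLeftDescent_iff.mp ha
      exact ⟨(cs Γ).simple i * a, v, v', e, by group, by omega, by omega, hm', hv, hv'⟩
    · have hvi' := (cs Γ).isRightDescent_iff.mp hvi
      refine ⟨a, v * (cs Γ).simple i, v', e, ?_, by omega, by omega, hm',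
        fun k j hk hj => ?_, hv'⟩
      · rw [mul_inv_rev, (cs Γ).inv_simple]
        simp only [← mul_assoc, (commute_simple_of_mem_racParabolic ha).eq]
      · refine hv k j ?_ hj
        have hvs := (cs Γ).isLeftDescent_mul_of_length_eq (b := (cs Γ).simple i)
          (by rw [(cs Γ).simple_mul_simple_cancel_right, (cs Γ).length_simple]; omega) hk
        rwa [(cs Γ).simple_mul_simple_cancel_right] at hvs
    · have he' := (cs Γ).isLeftDescent_iff.mp he
      refine ⟨a, v, v', (cs Γ).simple i * e, ?_, by omega, by omega, hm', hv, hv'⟩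
      rw [← mul_assoc, (commute_simple_of_mem_racParabolic hN).eq, mul_assoc]
  · have hy := (cs Γ).not_isLeftDescent_iff.mp hi
    have hsa := length_sandwich_le ((cs Γ).simple i * a) v u v' e
    have hsa' := (cs Γ).length_mul_le ((cs Γ).simple i) a
    rw [(cs Γ).length_simple] at hsa'
    refine ⟨(cs Γ).simple i * a, v, v', e, by group, ?_, by omega, hm', hv, hv'⟩
    rw [show (cs Γ).simple i * a * v⁻¹ * u * v' * e =
      (cs Γ).simple i * (a * v⁻¹ * u * v' * e) by group] at hsa
    omega

theorem Guarded.wordProd_mul {u y : (racMatrix Γ).Group} {m m' : ℕ} (hu : u ≠ 1)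
    (ω : List V) (h : Guarded Γ u (m + ω.length) m' y) :
    Guarded Γ u m m' ((cs Γ).wordProd ω * y) := by
  induction ω generalizing m with
  | nil => simpa using h
  | cons i ω ih =>
    rw [(cs Γ).wordProd_cons, mul_assoc]
    exact (ih (by rwa [List.length_cons, ← add_assoc, add_right_comm] at h)).simple_mul hu i

theorem Guarded.mul_left {u y : (racMatrix Γ).Group} {m m' : ℕ} (hu : u ≠ 1)
    (h : Guarded Γ u m m' y) {w : (racMatrix Γ).Group} (hw : (cs Γ).length w ≤ m) :
    Guarded Γ u (m - (cs Γ).length w) m' (w * y) := by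
  obtain ⟨ω, hω, rfl⟩ := (cs Γ).exists_isReduced w
  refine Guarded.wordProd_mul hu ω ?_
  rwa [← hω, Nat.sub_add_cancel hw]

theorem Guarded.mul_right {u y : (racMatrix Γ).Group} {m m' : ℕ} (hu : u ≠ 1)
    (h : Guarded Γ u m m' y) {w : (racMatrix Γ).Group} (hw : (cs Γ).length w ≤ m') :
    Guarded Γ u m (m' - (cs Γ).length w) (y * w) := by
  have := (h.inv.mul_left (inv_ne_one.mpr hu) (w := w⁻¹) (by rwa [(cs Γ).length_inv])).inv
  simpa [(cs Γ).length_inv] using this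

theorem guarded_inv_mul_mul {u v v' : (racMatrix Γ).Group} (hu : u ≠ 1)
    (hv : LeftDescentsNoncommuting Γ v u) (hv' : LeftDescentsNoncommuting Γ v' u⁻¹) :
    Guarded Γ u ((cs Γ).length v) ((cs Γ).length v') (v⁻¹ * u * v') := by
  have hvu : (cs Γ).length (v⁻¹ * u) = (cs Γ).length v + (cs Γ).length u := by
    rw [length_mul_of_forall_not_isLeftDescent, (cs Γ).length_inv]
    exact fun i hvi hui => (hv i i ((cs Γ).isRightDescent_inv_iff.mp hvi) hui).1 rfl
  have hvuv' :
      (cs Γ).length (v⁻¹ * u * v') = (cs Γ).length (v⁻¹ * u) + (cs Γ).length v' := by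
    refine length_mul_of_forall_not_isLeftDescent fun i hi hv'i => ?_
    rw [← (cs Γ).isLeftDescent_inv_iff, mul_inv_rev, inv_inv] at hi
    have hlen : (cs Γ).length (u⁻¹ * v) = (cs Γ).length u⁻¹ + (cs Γ).length v := by
      have := (cs Γ).length_inv (v⁻¹ * u)
      rw [mul_inv_rev, inv_inv] at this
      rw [this, hvu, (cs Γ).length_inv, add_comm]
    rcases isLeftDescent_mul_cases hlen hi with hui | ⟨huN, -⟩
    · exact (hv' i i hv'i hui).1 rfl
    · obtain ⟨j, hj⟩ := (cs Γ).exists_leftDescent_of_ne_one (inv_ne_one.mpr hu)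
      exact (hv' i j hv'i hj).2 (mem_of_isLeftDescent_of_mem_racParabolic huN hj)
  refine ⟨1, v, v', 1, by group, ?_, le_rfl, le_rfl, hv, hv'⟩
  simp [hvuv', hvu]

theorem Guarded.not_mem_racParabolic {u y : (racMatrix Γ).Group} {m m' : ℕ} {Λ : Set V}
    (hu : u ∉ racParabolic Γ Λ) (h : Guarded Γ u m m' y) : y ∉ racParabolic Γ Λ := by
  obtain ⟨a, v, v', e, rfl, hlen, -⟩ := h
  refine fun hy => hu (mem_racParabolic_of_mul_mul_mem (a := a * v⁻¹) (b := v' * e) ?_ ?_)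
  · have h₁ := (cs Γ).length_mul_le a v⁻¹
    have h₂ := (cs Γ).length_mul_le v' e
    have h₃ := (cs Γ).length_mul_le (a * v⁻¹ * u) (v' * e)
    have h₄ := (cs Γ).length_mul_le (a * v⁻¹) u
    rw [(cs Γ).length_inv] at h₁
    rw [← mul_assoc] at h₃ ⊢
    omega
  · simpa [mul_assoc] using hy

end Sandwich

end Group

end RightAngledCoxeter

/-- **Conjugates avoid parabolic subgroups** (Corollary of Lemma 8.2 of the paper).
Let `Γ` be a simple graph with right-angled Coxeter system `cs`, `Λ ⊆ V`, and
`u ∉ W_Λ`.  Let `v, v'` be such that every left descent of `v` is distinct from and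
non-adjacent to every left descent of `u` (every letter at the start of `v` does not
commute with any letter at the end of `u⁻¹`), and every left descent of `v'` is
distinct from and non-adjacent to every right descent of `u` (every letter at the
start of `v'` does not commute with any letter at the end of `u`).  Then for all
`w, w'` with `ℓ(w) ≤ ℓ(v)` and `ℓ(w') ≤ ℓ(v')`, we have
`w * v⁻¹ * u * v' * w' ∉ W_Λ`. -/
theorem rac_sandwich_not_mem_parabolic {V : Type*} [DecidableEq V]
    (Γ : SimpleGraph V) [DecidableRel Γ.Adj] (Λ : Set V)
    (u v v' w w' : (racMatrix Γ).Group)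
    (hu : u ∉ racParabolic Γ Λ)
    (hv : ∀ i j : V, (racMatrix Γ).toCoxeterSystem.IsLeftDescent v i →
      (racMatrix Γ).toCoxeterSystem.IsLeftDescent u j → i ≠ j ∧ ¬ Γ.Adj i j)
    (hv' : ∀ i j : V, (racMatrix Γ).toCoxeterSystem.IsLeftDescent v' i →
      (racMatrix Γ).toCoxeterSystem.IsRightDescent u j → i ≠ j ∧ ¬ Γ.Adj i j)
    (hw : (racMatrix Γ).toCoxeterSystem.length w ≤
      (racMatrix Γ).toCoxeterSystem.length v)
    (hw' : (racMatrix Γ).toCoxeterSystem.length w' ≤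
      (racMatrix Γ).toCoxeterSystem.length v') :
    w * v⁻¹ * u * v' * w' ∉ racParabolic Γ Λ := by
  open RightAngledCoxeter in
  have hu₁ : u ≠ 1 := fun h => hu (h ▸ (racParabolic Γ Λ).one_mem)
  have hv'' : LeftDescentsNoncommuting Γ v' u⁻¹ := fun i j hi hj =>
    hv' i j hi ((cs Γ).isLeftDescent_inv_iff.mp hj)
  have hy := ((guarded_inv_mul_mul hu₁ hv hv'').mul_left hu₁ hw).mul_right hu₁ hw'
  simpa [mul_assoc] using hy.not_mem_racParabolic hu
end
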